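/- arXiv:1405.3216 — 5 statements merged into one kernel-verified Lean document; each statement's English description precedes it below -/
import Mathlib

section
/- The map σ : W_{n-1} → S̃_n given by σ(x) = x − div(x)·x_nD_n is an injective homomorphism of Lie algebras, where an element x = Σ_{i=1}^{n-1} f_iD_i of W_{n-1} is viewed inside W_n via the inclusion B_{n-1} ⊆ B_n. -/
open MvPolynomial Finset

/-!
Let `D_i` be the partial derivatives dual to the `x_i`. A derivation is determined by its values
on the `x_i`, and `div ⁅y, z⁆ = y (div z) - z (div y)`. If `y` has no `D_ℓ`-component and its
coefficients are killed by `D_ℓ`, then `D_ℓ` commutes with `y` and kills `div y`, so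
`D_ℓ (div y · x_ℓ) = div y`. This makes `σ y` divergence free, recovers `div y` from
`σ y (x_ℓ) = -div y · x_ℓ` (hence injectivity), and collapses the correction terms of
`⁅σ y, σ z⁆` to `-div ⁅y, z⁆ · x_ℓ D_ℓ`.
-/

section

variable {k B ι : Type*} [CommRing k] [CommRing B] [Algebra k B]

section

variable [Fintype ι]

theorem Module.Basis.derivation_apply_eq_sum (b : Module.Basis ι B (Derivation k B B))
    (w : Derivation k B B) (g : B) : w g = ∑ i, b.repr w i * b i g := by
  conv_lhs => rw [← b.sum_repr w]
  rw [← Derivation.coeFnAddMonoidHom_apply, map_sum]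
  simp

noncomputable def divergence (b : Module.Basis ι B (Derivation k B B)) (w : Derivation k B B) :
    B :=
  ∑ i, b i (b.repr w i)

theorem divergence_sub (b : Module.Basis ι B (Derivation k B B)) (v w : Derivation k B B) :
    divergence b (v - w) = divergence b v - divergence b w := by
  simp [divergence, sum_sub_distrib]

theorem divergence_smul_basis (b : Module.Basis ι B (Derivation k B B)) (f : B) (i : ι) :
    divergence b (f • b i) = b i f := by
  classical
  simp [divergence, Finsupp.single_apply, apply_ite]

noncomputable def divFreeLift (b : Module.Basis ι B (Derivation k B B)) (x : ι → B) (ℓ : ι)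
    (y : Derivation k B B) : Derivation k B B :=
  y - (divergence b y * x ℓ) • b ℓ

end

variable [DecidableEq ι]

def IsPartialDerivBasis (b : Module.Basis ι B (Derivation k B B)) (x : ι → B) : Prop :=
  ∀ i j, b i (x j) = if i = j then 1 else 0

namespace IsPartialDerivBasis

variable {b : Module.Basis ι B (Derivation k B B)} {x : ι → B}

theorem lie_apply (h : IsPartialDerivBasis b x) (i : ι) (w : Derivation k B B) (j : ι) :
    ⁅b i, w⁆ (x j) = b i (w (x j)) := by
  rw [Derivation.commutator_apply, h i j]
  split_ifs <;> simp

variable [Fintype ι]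

theorem repr_apply (h : IsPartialDerivBasis b x) (w : Derivation k B B) (j : ι) :
    b.repr w j = w (x j) := by
  simp [b.derivation_apply_eq_sum w (x j), h _ j]

theorem apply_eq_sum (h : IsPartialDerivBasis b x) (w : Derivation k B B) (g : B) :
    w g = ∑ i, w (x i) * b i g := by
  simp only [b.derivation_apply_eq_sum w g, h.repr_apply]

theorem ext (h : IsPartialDerivBasis b x) {v w : Derivation k B B}
    (hvw : ∀ j, v (x j) = w (x j)) : v = w :=
  b.repr.injective <| Finsupp.ext fun j => by rw [h.repr_apply, h.repr_apply, hvw]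

theorem divergence_eq (h : IsPartialDerivBasis b x) (w : Derivation k B B) :
    divergence b w = ∑ i, b i (w (x i)) := by
  simp only [divergence, h.repr_apply]

theorem lie_eq_zero (h : IsPartialDerivBasis b x) {i : ι} {w : Derivation k B B}
    (hw : ∀ j, b i (w (x j)) = 0) : ⁅b i, w⁆ = 0 :=
  h.ext fun j => by rw [h.lie_apply, hw, Derivation.zero_apply]

theorem apply_comm (h : IsPartialDerivBasis b x) {i : ι} {w : Derivation k B B}
    (hw : ∀ j, b i (w (x j)) = 0) (g : B) : b i (w g) = w (b i g) := by
  simpa [Derivation.commutator_apply, sub_eq_zero] using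
    congrArg (fun d : Derivation k B B => d g) (h.lie_eq_zero hw)

theorem apply_divergence (h : IsPartialDerivBasis b x) {i : ι} {w : Derivation k B B}
    (hw : ∀ j, b i (w (x j)) = 0) : b i (divergence b w) = 0 := by
  rw [h.divergence_eq, map_sum]
  refine sum_eq_zero fun j _ => ?_
  rw [h.apply_comm (w := b j) (fun m => by rw [h j m]; split_ifs <;> simp), hw, map_zero]

theorem divergence_lie (h : IsPartialDerivBasis b x) (y z : Derivation k B B) :
    divergence b ⁅y, z⁆ = y (divergence b z) - z (divergence b y) := by
  -- `⁅b i, u⁆ = ∑ j, b i (u (x j)) • b j`, and the double sum this produces is symmetric in `u, v`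
  have key : ∀ u v : Derivation k B B, ∑ i, b i (u (v (x i))) =
      ∑ i, ∑ j, b i (u (x j)) * b j (v (x i)) + u (divergence b v) := by
    intro u v
    simp only [h.divergence_eq, map_sum, ← sum_add_distrib]
    refine sum_congr rfl fun i _ => ?_
    have hi := h.apply_eq_sum ⁅b i, u⁆ (v (x i))
    simp only [h.lie_apply, Derivation.commutator_apply] at hi
    linear_combination hi
  have swap : ∀ u v : Derivation k B B, ∑ i, ∑ j, b i (u (x j)) * b j (v (x i)) =
      ∑ i, ∑ j, b i (v (x j)) * b j (u (x i)) := by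
    intro u v
    rw [sum_comm]
    simp only [mul_comm]
  rw [h.divergence_eq]
  simp only [Derivation.commutator_apply, map_sub, sum_sub_distrib, key, swap y z]
  ring

theorem divergence_divFreeLift (h : IsPartialDerivBasis b x) {ℓ : ι} {y : Derivation k B B}
    (hy : ∀ j, b ℓ (y (x j)) = 0) : divergence b (divFreeLift b x ℓ y) = 0 := by
  rw [divFreeLift, divergence_sub, divergence_smul_basis, Derivation.leibniz,
    h.apply_divergence hy, h ℓ ℓ]
  simp

theorem divFreeLift_injOn (h : IsPartialDerivBasis b x) (ℓ : ι) :
    Set.InjOn (divFreeLift b x ℓ) {y | y (x ℓ) = 0} := by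
  intro y hy z hz hyz
  have hc : divergence b y * x ℓ = divergence b z * x ℓ := by
    simpa [divFreeLift, h ℓ ℓ, hy.out, hz.out] using congrArg (· (x ℓ)) hyz
  calc y = divFreeLift b x ℓ y + (divergence b y * x ℓ) • b ℓ := by simp [divFreeLift]
    _ = z := by rw [hyz, hc]; simp [divFreeLift]

theorem divFreeLift_lie (h : IsPartialDerivBasis b x) {ℓ : ι} {y z : Derivation k B B}
    (hyℓ : y (x ℓ) = 0) (hy : ∀ j, b ℓ (y (x j)) = 0)
    (hzℓ : z (x ℓ) = 0) (hz : ∀ j, b ℓ (z (x j)) = 0) :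
    divFreeLift b x ℓ ⁅y, z⁆ = ⁅divFreeLift b x ℓ y, divFreeLift b x ℓ z⁆ := by
  ext g
  simp only [divFreeLift, Derivation.commutator_apply, Derivation.sub_apply,
    Derivation.smul_apply, smul_eq_mul, map_sub, Derivation.leibniz, hyℓ, hzℓ,
    h.apply_divergence hy, h.apply_divergence hz, h ℓ ℓ, if_true, h.divergence_lie,
    h.apply_comm hy, h.apply_comm hz]
  ring

end IsPartialDerivBasis

end

theorem sigma_injective_lie_algebra_hom_general
    (k : Type*) [Field k] (n : ℕ)
    (B : Type*) [CommRing B] [Algebra k B]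
    (x : Fin n → B)
    (D : Fin n → Derivation k B B) (hD : ∀ i j, D i (x j) = if i = j then 1 else 0)
    (b : Module.Basis (Fin n) B (Derivation k B B)) (hb : ∀ i, b i = D i)
    (div : Derivation k B B → B) (hdiv : ∀ y, div y = ∑ i, D i (b.repr y i))
    (ℓ : Fin n)
    -- `P y` says that `y` lies in the image of `W_{n-1} ⊆ W_n`
    (P : Derivation k B B → Prop)
    (hP : ∀ y, P y ↔ (b.repr y ℓ = 0 ∧ ∀ i, D ℓ (b.repr y i) = 0))
    (σ : Derivation k B B → Derivation k B B)
    (hσ : ∀ y, σ y = y - (div y * x ℓ) • D ℓ) :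
    (∀ y, P y → div (σ y) = 0) ∧
      (∀ y z, P y → P z → σ y = σ z → y = z) ∧
      (∀ y z, P y → P z → σ ⁅y, z⁆ = ⁅σ y, σ z⁆) := by
  obtain rfl : D = ⇑b := funext fun i => (hb i).symm
  have h : IsPartialDerivBasis b x := hD
  obtain rfl : div = divergence b := funext hdiv
  obtain rfl : σ = divFreeLift b x ℓ := funext hσ
  have hP' : ∀ y, P y → y (x ℓ) = 0 ∧ ∀ j, b ℓ (y (x j)) = 0 := fun y hy => by
    simpa only [h.repr_apply] using (hP y).1 hy
  refine ⟨fun y hy => h.divergence_divFreeLift (hP' y hy).2,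
    fun y z hy hz => h.divFreeLift_injOn ℓ (hP' y hy).1 (hP' z hz).1, fun y z hy hz => ?_⟩
  obtain ⟨hyℓ, hy⟩ := hP' y hy
  obtain ⟨hzℓ, hz⟩ := hP' z hz
  exact h.divFreeLift_lie hyℓ hy hzℓ hz

/-- The map `σ : W_{n-1} → S̃_n`, `σ(y) = y − div(y)·x_n D_n`, is an injective homomorphism of
Lie algebras.  Here `W_{n-1}` is realized inside `W_n` as the set of derivations
`y = Σ_{i<n} f_i D_i` whose `D_n`-component vanishes and whose coefficients do not involve
`x_n` (i.e. are killed by `D_n`). -/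
theorem sigma_injective_lie_algebra_hom
    (k : Type*) [Field k] (p n : ℕ) [Fact (Nat.Prime p)] [CharP k p] (hp : 3 < p)
    (hn : 3 ≤ n)
    (B : Type*) [CommRing B] [Algebra k B]
    (e : (MvPolynomial (Fin n) k ⧸
        Ideal.span (Set.range fun i : Fin n => (X i : MvPolynomial (Fin n) k) ^ p)) ≃ₐ[k] B)
    (x : Fin n → B) (hx : ∀ j, x j = e (Ideal.Quotient.mk _ (X j)))
    (D : Fin n → Derivation k B B) (hD : ∀ i j, D i (x j) = if i = j then 1 else 0)
    (b : Module.Basis (Fin n) B (Derivation k B B)) (hb : ∀ i, b i = D i)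
    (div : Derivation k B B → B) (hdiv : ∀ y, div y = ∑ i, D i (b.repr y i))
    (ℓ : Fin n) (hℓ : (ℓ : ℕ) = n - 1)
    -- `P y` says that `y` lies in the image of `W_{n-1} ⊆ W_n`
    (P : Derivation k B B → Prop)
    (hP : ∀ y, P y ↔ (b.repr y ℓ = 0 ∧ ∀ i, D ℓ (b.repr y i) = 0))
    (σ : Derivation k B B → Derivation k B B)
    (hσ : ∀ y, σ y = y - (div y * x ℓ) • D ℓ) :
    (∀ y, P y → div (σ y) = 0) ∧
      (∀ y z, P y → P z → σ y = σ z → y = z) ∧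
      (∀ y z, P y → P z → σ ⁅y, z⁆ = ⁅σ y, σ z⁆) :=
  sigma_injective_lie_algebra_hom_general k n B x D hD b hb div hdiv ℓ P hP σ hσ
end

section
/- The kernel of the derivation Δ = D_1 + x_1^{p-1}D_2 + ··· + x_1^{p-1}···x_{n-2}^{p-1}D_{n-1}, acting as a linear operator on B_n, equals the p-dimensional space K = { a_0 + a_1x_n + ··· + a_{p-1}x_n^{p-1} : a_i ∈ k }. -/
/-!
The monomials `x^a = ∏ xᵢ ^ aᵢ` with `0 ≤ aᵢ < p` form a basis of `B_n`. Read the exponent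
vector `a` as a number written in base `p`, with `x_1` the lowest digit, and let `i₀ ≤ n - 1` be
its lowest nonzero digit among the first `n - 1`. Then `Δ x^a = a_{i₀} x^{a - 1}`: the terms
`x_1^{p-1}⋯x_{i-1}^{p-1} D_i` with `i < i₀` vanish because `aᵢ = 0`, those with `i > i₀` because
their coefficient contains `x_{i₀}^{p-1}` while `D_i x^a` is still divisible by `x_{i₀}`, and in
the term `i = i₀` the coefficient `x_1^{p-1}⋯x_{i₀-1}^{p-1}` is exactly the borrow. Since
`0 < a_{i₀} < p` and subtracting one is injective, `Δ` sends these basis vectors to nonzero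
multiples of distinct basis vectors, and it kills the remaining ones, the powers of `x_n`.
-/

open MvPolynomial Finset

namespace MvPolynomial

variable {σ R : Type*} [CommRing R] (p : ℕ)

theorem mem_span_X_pow_iff {f : MvPolynomial σ R} :
    f ∈ Ideal.span (Set.range fun i => (X i : MvPolynomial σ R) ^ p) ↔
      ∀ s ∈ f.support, ∃ i, p ≤ s i := by
  have : (Set.range fun i => (X i : MvPolynomial σ R) ^ p) =
      (fun s => monomial s 1) '' Set.range fun i => Finsupp.single i p := by
    rw [← Set.range_comp]
    simp [Function.comp_def, X_pow_eq_monomial]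
  rw [this, mem_ideal_span_monomial_image]
  simp [Finsupp.single_le_iff]

variable [Fintype σ]

theorem prod_X_pow_eq_monomial_equivFunOnFinite (a : σ → ℕ) :
    ∏ i, (X i : MvPolynomial σ R) ^ a i = monomial (Finsupp.equivFunOnFinite.symm a) 1 := by
  rw [monomial_eq, C_1, one_mul, Finsupp.prod_fintype _ _ fun _ => pow_zero _]
  rfl

theorem linearIndependent_mk_prod_X_pow :
    LinearIndependent R fun a : σ → Fin p =>
      Ideal.Quotient.mkₐ R (Ideal.span (Set.range fun i => (X i : MvPolynomial σ R) ^ p))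
        (∏ i, X i ^ (a i : ℕ)) := by
  let exps : (σ → Fin p) → σ →₀ ℕ := fun a => Finsupp.equivFunOnFinite.symm fun i => a i
  have hexps : Function.Injective exps := by
    intro a a' h
    funext i
    exact Fin.ext (by simpa [exps] using DFunLike.congr_fun h i)
  have hsupp : Submodule.span R (Set.range (basisMonomials σ R ∘ exps)) ≤
      restrictSupport R {s | ∀ i, s i < p} := by
    refine Submodule.span_le.2 ?_
    rintro _ ⟨a, rfl⟩
    simp only [Function.comp_apply, coe_basisMonomials, SetLike.mem_coe,
      mem_restrictSupport_iff]
    refine (Finset.coe_subset.2 support_monomial_subset).trans ?_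
    simp [exps]
  simp_rw [prod_X_pow_eq_monomial_equivFunOnFinite]
  refine ((basisMonomials σ R).linearIndependent.comp exps hexps).map
    (f := (Ideal.Quotient.mkₐ R _).toLinearMap) (Submodule.disjoint_def.2 fun f hf hker => ?_)
  rw [LinearMap.mem_ker, AlgHom.toLinearMap_apply, Ideal.Quotient.mkₐ_eq_mk,
    Ideal.Quotient.eq_zero_iff_mem, mem_span_X_pow_iff] at hker
  rw [← support_eq_empty, Finset.eq_empty_iff_forall_notMem]
  intro s hs
  obtain ⟨i, hi⟩ := hker s hs
  exact (hsupp hf hs i).not_ge hi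

theorem span_mk_prod_X_pow :
    ⊤ ≤ Submodule.span R (Set.range fun a : σ → Fin p =>
      Ideal.Quotient.mkₐ R (Ideal.span (Set.range fun i => (X i : MvPolynomial σ R) ^ p))
        (∏ i, X i ^ (a i : ℕ))) := by
  rw [← (LinearMap.range_eq_top (f := (Ideal.Quotient.mkₐ R _).toLinearMap)).2
      (Ideal.Quotient.mkₐ_surjective R _), LinearMap.range_eq_map,
    ← (basisMonomials σ R).span_eq, Submodule.map_span, Submodule.span_le]
  rintro _ ⟨_, ⟨s, rfl⟩, rfl⟩
  by_cases hs : ∀ i, s i < p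
  · refine Submodule.subset_span ⟨fun i => ⟨s i, hs i⟩, ?_⟩
    simp only [prod_X_pow_eq_monomial_equivFunOnFinite, Finsupp.equivFunOnFinite_symm_coe,
      coe_basisMonomials]
    rfl
  · simp only [not_forall, not_lt] at hs
    have hmem : monomial s (1 : R) ∈
        Ideal.span (Set.range fun i => (X i : MvPolynomial σ R) ^ p) :=
      (mem_span_X_pow_iff p).2 fun t ht => by
        rw [Finset.mem_singleton.1 (support_monomial_subset ht)]
        exact hs
    simp [Ideal.Quotient.eq_zero_iff_mem.2 hmem]

variable (σ R)

noncomputable def truncatedMonomialBasis :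
    Module.Basis (σ → Fin p) R
      (MvPolynomial σ R ⧸ Ideal.span (Set.range fun i => (X i : MvPolynomial σ R) ^ p)) :=
  .mk (linearIndependent_mk_prod_X_pow p) (span_mk_prod_X_pow p)

theorem truncatedMonomialBasis_apply (a : σ → Fin p) :
    truncatedMonomialBasis σ R p a = Ideal.Quotient.mk _ (∏ i, X i ^ (a i : ℕ)) :=
  Module.Basis.mk_apply ..

end MvPolynomial

namespace Module.Basis

variable {ι κ R M N : Type*} [Fintype ι] [Ring R] [NoZeroDivisors R]
  [AddCommGroup M] [Module R M] [AddCommGroup N] [Module R N]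

theorem ker_eq_span_image_compl (b : Basis ι R M) (b' : Basis κ R N) (T : M →ₗ[R] N)
    {S : Set ι} {σ : ι → κ} {c : ι → R} (hσ : S.InjOn σ) (hc : ∀ a ∈ S, c a ≠ 0)
    (hS : ∀ a ∈ S, T (b a) = c a • b' (σ a)) (hSc : ∀ a ∉ S, T (b a) = 0) :
    LinearMap.ker T = Submodule.span R (b '' Sᶜ) := by
  classical
  refine le_antisymm (fun f hf => ?_) (Submodule.span_le.2 ?_)
  · rw [b.mem_span_image]
    intro a₀ ha₀ ha₀S
    have hterm : ∀ a, b.repr f a * b'.repr (T (b a)) (σ a₀) =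
        if a = a₀ then b.repr f a₀ * c a₀ else 0 := by
      intro a
      by_cases ha : a ∈ S
      · rw [hS a ha, map_smul, repr_self, Finsupp.smul_apply, Finsupp.single_apply,
          hσ.eq_iff ha ha₀S]
        split_ifs with h <;> simp [h]
      · rw [hSc a ha, map_zero, Finsupp.zero_apply, mul_zero, if_neg (by rintro rfl; exact ha ha₀S)]
    have hcoeff : b'.repr (T f) (σ a₀) = b.repr f a₀ * c a₀ := by
      conv_lhs => rw [← b.sum_repr f]
      simp only [map_sum, map_smul, Finsupp.coe_finsetSum, Finset.sum_apply, Finsupp.smul_apply,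
        smul_eq_mul, hterm, Finset.sum_ite_eq', Finset.mem_univ, if_true]
    rw [LinearMap.mem_ker.1 hf, map_zero, Finsupp.zero_apply, eq_comm] at hcoeff
    exact Finsupp.mem_support_iff.1 ha₀ ((mul_eq_zero.1 hcoeff).resolve_right (hc a₀ ha₀S))
  · rintro _ ⟨a, ha, rfl⟩
    exact hSc a ha

end Module.Basis

theorem Derivation.finset_sum_apply {R A M ι : Type*} [CommSemiring R] [CommSemiring A]
    [Algebra R A] [AddCommMonoid M] [Module A M] [Module R M] [IsScalarTower R A M]
    (s : Finset ι) (D : ι → Derivation R A M) (a : A) :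
    (∑ i ∈ s, D i) a = ∑ i ∈ s, D i a := by
  rw [← Derivation.coeFnAddMonoidHom_apply, map_sum, Finset.sum_apply]
  rfl

theorem Derivation.apply_prod_pow {R A ι : Type*} [CommSemiring R] [CommSemiring A] [Algebra R A]
    [Fintype ι] [DecidableEq ι] (D : Derivation R A A) {x : ι → A} {i : ι} (hi : D (x i) = 1)
    (hother : ∀ j ≠ i, D (x j) = 0) (c : ι → ℕ) :
    D (∏ j, x j ^ c j) = c i • ∏ j, x j ^ Function.update c i (c i - 1) j := by
  have hrest : D (∏ j ∈ univ.erase i, x j ^ c j) = 0 :=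
    Finset.prod_induction _ (fun y => D y = 0)
      (fun y z hy hz => by rw [D.leibniz, hy, hz, smul_zero, smul_zero, add_zero])
      D.map_one_eq_zero
      fun j hj => by
        rw [D.leibniz_pow, hother j (Finset.ne_of_mem_erase hj), smul_zero, smul_zero]
  have hupdate : ∏ j ∈ univ.erase i, x j ^ Function.update c i (c i - 1) j =
      ∏ j ∈ univ.erase i, x j ^ c j :=
    Finset.prod_congr rfl fun j hj => by rw [Function.update_of_ne (Finset.ne_of_mem_erase hj)]
  rw [← Finset.mul_prod_erase univ _ (mem_univ i), ← Finset.mul_prod_erase univ _ (mem_univ i),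
    D.leibniz, hrest, D.leibniz_pow, hi, hupdate, Function.update_self]
  simp only [smul_eq_mul, nsmul_eq_mul, mul_one]
  ring

section DecrementAt

variable {ι : Type*} [LinearOrder ι]

/-- If `i₀` is the lowest nonzero digit of `a`, then `decrementAt a i₀` is `a - 1` in base `p`. -/
def decrementAt {p : ℕ} (a : ι → Fin p) (i₀ : ι) : ι → Fin p := fun j =>
  if j < i₀ then ⟨p - 1, by have := (a i₀).isLt; omega⟩
  else if j = i₀ then ⟨a i₀ - 1, by have := (a i₀).isLt; omega⟩
  else a j

theorem decrementAt_val {p : ℕ} (a : ι → Fin p) (i₀ j : ι) :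
    (decrementAt a i₀ j : ℕ) = if j < i₀ then p - 1 else if j = i₀ then a i₀ - 1 else a j := by
  unfold decrementAt
  split_ifs <;> rfl

theorem eq_of_decrementAt_eq {p : ℕ} {a a' : ι → Fin p} {i₀ i₀' : ι}
    (ha : (a i₀ : ℕ) ≠ 0) (hmin : ∀ j < i₀, (a j : ℕ) = 0)
    (ha' : (a' i₀' : ℕ) ≠ 0) (hmin' : ∀ j < i₀', (a' j : ℕ) = 0)
    (h : decrementAt a i₀ = decrementAt a' i₀') : a = a' := by
  have hval : ∀ j, (decrementAt a i₀ j : ℕ) = decrementAt a' i₀' j := fun j => by rw [h]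
  simp only [decrementAt_val] at hval
  have hlt := (a i₀).isLt
  have hlt' := (a' i₀').isLt
  -- the lowest nonzero digit is the lowest digit of `a - 1` that is not `p - 1`
  obtain rfl : i₀ = i₀' := by
    rcases lt_trichotomy i₀ i₀' with hi | hi | hi
    · have := hval i₀
      simp only [lt_irrefl, if_false, if_true, hi] at this
      omega
    · exact hi
    · have := hval i₀'
      simp only [lt_irrefl, if_false, if_true, hi] at this
      omega
  funext j
  refine Fin.ext ?_
  rcases lt_trichotomy j i₀ with hj | rfl | hj
  · rw [hmin j hj, hmin' j hj]
  · have := hval j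
    simp only [lt_irrefl, if_false, if_true] at this
    omega
  · simpa [not_lt.2 hj.le, hj.ne'] using hval j

end DecrementAt

section DeltaDerivation

variable {R A ι : Type*} [CommSemiring R] [CommSemiring A] [Algebra R A] [Fintype ι]
  [LinearOrder ι] [LocallyFiniteOrderBot ι]

noncomputable def deltaDerivation (p : ℕ) (x : ι → A) (D : ι → Derivation R A A) (ℓ : ι) :
    Derivation R A A :=
  ∑ i ∈ Iio ℓ, (∏ j ∈ Iio i, x j ^ (p - 1)) • D i

variable {x : ι → A} {D : ι → Derivation R A A}

theorem deltaDerivation_prod_pow_of_forall_lt_eq_zero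
    (hD : ∀ i j, D i (x j) = if i = j then 1 else 0) (p : ℕ) {ℓ : ι} {a : ι → ℕ}
    (ha : ∀ i < ℓ, a i = 0) : deltaDerivation p x D ℓ (∏ j, x j ^ a j) = 0 := by
  rw [deltaDerivation, Derivation.finset_sum_apply]
  refine Finset.sum_eq_zero fun i hi => ?_
  rw [Derivation.smul_apply,
    (D i).apply_prod_pow (by rw [hD, if_pos rfl]) (fun j hj => by rw [hD, if_neg hj.symm]),
    ha i (Finset.mem_Iio.1 hi), zero_smul, smul_zero]

theorem deltaDerivation_prod_pow (hD : ∀ i j, D i (x j) = if i = j then 1 else 0) {p : ℕ}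
    (hxp : ∀ i, x i ^ p = 0) {ℓ i₀ : ι} (hi₀ : i₀ < ℓ)
    {a : ι → Fin p} (ha : (a i₀ : ℕ) ≠ 0) (hmin : ∀ j < i₀, (a j : ℕ) = 0) :
    deltaDerivation p x D ℓ (∏ j, x j ^ (a j : ℕ)) =
      (a i₀ : ℕ) • ∏ j, x j ^ (decrementAt a i₀ j : ℕ) := by
  set c : ι → ℕ := fun j => a j
  have hDc : ∀ i, D i (∏ j, x j ^ c j) = c i • ∏ j, x j ^ Function.update c i (c i - 1) j :=
    fun i => (D i).apply_prod_pow (by rw [hD, if_pos rfl])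
      (fun j hj => by rw [hD, if_neg hj.symm]) c
  have hp : p ≠ 0 := by have := (a i₀).isLt; omega
  rw [deltaDerivation, Derivation.finset_sum_apply,
    Finset.sum_eq_single_of_mem i₀ (mem_Iio.2 hi₀)]
  · have hprefix : ∏ j ∈ Iio i₀, x j ^ (p - 1) = ∏ j, x j ^ (if j < i₀ then p - 1 else 0) := by
      rw [← filter_gt_eq_Iio, prod_filter]
      exact prod_congr rfl fun j _ => by split_ifs <;> simp
    rw [Derivation.smul_apply, hDc, smul_comm, smul_eq_mul, hprefix, ← prod_mul_distrib]
    refine congrArg _ (prod_congr rfl fun j _ => ?_)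
    rw [← pow_add, decrementAt_val]
    congr 1
    rcases lt_trichotomy j i₀ with hj | rfl | hj
    · simp [hj, hj.ne, c, hmin j hj]
    · simp [c]
    · simp [not_lt.2 hj.le, hj.ne', c]
  · intro i hi hne
    rcases hne.lt_or_gt with hlt | hgt
    · rw [Derivation.smul_apply, hDc, show c i = 0 from hmin i hlt, zero_smul, smul_zero]
    · refine zero_dvd_iff.1 (hxp i₀ ▸ ?_)
      rw [Derivation.smul_apply, smul_eq_mul, ← pow_sub_one_mul hp, hDc, nsmul_eq_mul]
      refine mul_dvd_mul (dvd_prod_of_mem _ (mem_Iio.2 hgt)) (Dvd.dvd.mul_left ?_ _)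
      refine (dvd_pow_self _ ?_).trans (dvd_prod_of_mem _ (mem_univ i₀))
      rwa [Function.update_of_ne hgt.ne]

end DeltaDerivation

theorem ker_deltaDerivation {k B ι : Type*} [CommRing k] [NoZeroDivisors k] [CommRing B]
    [Algebra k B] [Fintype ι] [LinearOrder ι] [LocallyFiniteOrderBot ι] {p : ℕ} [CharP k p]
    (b : Module.Basis (ι → Fin p) k B) {x : ι → B} (hb : ∀ a, b a = ∏ i, x i ^ (a i : ℕ))
    (hxp : ∀ i, x i ^ p = 0) {D : ι → Derivation k B B}
    (hD : ∀ i j, D i (x j) = if i = j then 1 else 0) (ℓ : ι) :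
    LinearMap.ker (deltaDerivation p x D ℓ).toLinearMap =
      Submodule.span k (b '' {a | ∀ j < ℓ, (a j : ℕ) = 0}) := by
  set S : Set (ι → Fin p) := {a | ∃ j < ℓ, (a j : ℕ) ≠ 0}
  have hlowest : ∀ a ∈ S, ∃ i < ℓ, (a i : ℕ) ≠ 0 ∧ ∀ j < i, (a j : ℕ) = 0 := by
    rintro a ⟨j, hjℓ, hj⟩
    obtain ⟨i, ⟨hiℓ, hi⟩, hmin⟩ :=
      wellFounded_lt.has_min {i | i < ℓ ∧ (a i : ℕ) ≠ 0} ⟨j, hjℓ, hj⟩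
    exact ⟨i, hiℓ, hi, fun j hji => by_contra fun hj => hmin j ⟨hji.trans hiℓ, hj⟩ hji⟩
  have : Nonempty ι := ⟨ℓ⟩
  choose! i₀ hi₀ using hlowest
  have hcompl : Sᶜ = {a | ∀ j < ℓ, (a j : ℕ) = 0} := by
    ext a
    simp [S]
  rw [← hcompl]
  refine b.ker_eq_span_image_compl b _ (σ := fun a => decrementAt a (i₀ a))
    (c := fun a => ((a (i₀ a) : ℕ) : k)) ?_ ?_ ?_ ?_
  · intro a ha a' ha' h
    obtain ⟨-, hne, hmin⟩ := hi₀ a ha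
    obtain ⟨-, hne', hmin'⟩ := hi₀ a' ha'
    exact eq_of_decrementAt_eq hne hmin hne' hmin' h
  · intro a ha
    obtain ⟨-, hne, -⟩ := hi₀ a ha
    rw [Ne, CharP.cast_eq_zero_iff k p]
    exact Nat.not_dvd_of_pos_of_lt (Nat.pos_of_ne_zero hne) (a (i₀ a)).isLt
  · intro a ha
    obtain ⟨hlt, hne, hmin⟩ := hi₀ a ha
    rw [hb, hb, Derivation.coeFn_coe, deltaDerivation_prod_pow hD hxp hlt hne hmin,
      Nat.cast_smul_eq_nsmul]
  · intro a ha
    rw [hb]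
    exact deltaDerivation_prod_pow_of_forall_lt_eq_zero hD p (by simpa [S] using ha)

theorem image_prod_pow_of_isTop {ι A : Type*} [Fintype ι] [LinearOrder ι] [CommMonoid A]
    {p : ℕ} {x : ι → A} {ℓ : ι} (hℓ : IsTop ℓ) :
    (fun a : ι → Fin p => ∏ i, x i ^ (a i : ℕ)) '' {a | ∀ j < ℓ, (a j : ℕ) = 0} =
      Set.range fun m : Fin p => x ℓ ^ (m : ℕ) := by
  have hlt : ∀ j, j ≠ ℓ → j < ℓ := fun j hj => lt_of_le_of_ne (hℓ j) hj
  ext y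
  constructor
  · rintro ⟨a, ha, rfl⟩
    refine ⟨a ℓ, ?_⟩
    dsimp only
    rw [Fintype.prod_eq_single ℓ fun j hj => by rw [ha j (hlt j hj), pow_zero]]
  · rintro ⟨m, rfl⟩
    refine ⟨fun j => if j = ℓ then m else ⟨0, m.pos⟩, fun j hj => by simp [hj.ne], ?_⟩
    dsimp only
    rw [Fintype.prod_eq_single ℓ fun j hj => by simp [hj]]
    simp

theorem sum_castLE_eq_deltaDerivation {R A : Type*} [CommSemiring R] [CommSemiring A] [Algebra R A]
    {n : ℕ} (p : ℕ) (x : Fin n → A) (D : Fin n → Derivation R A A) {ℓ : Fin n}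
    (hℓ : (ℓ : ℕ) = n - 1) :
    ∑ i : Fin (n - 1), (∏ j ∈ univ.filter (fun j : Fin (n - 1) => j < i),
        x (Fin.castLE (Nat.sub_le n 1) j) ^ (p - 1)) • D (Fin.castLE (Nat.sub_le n 1) i) =
      deltaDerivation p x D ℓ := by
  have huniv : univ.map (Fin.castLEEmb (Nat.sub_le n 1)) = Iio ℓ := by
    ext j
    simp only [mem_map, mem_univ, true_and, Fin.coe_castLEEmb, mem_Iio, Fin.lt_def, hℓ]
    exact ⟨fun ⟨i, hi⟩ => hi ▸ i.isLt, fun hj => ⟨⟨j, hj⟩, rfl⟩⟩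
  rw [deltaDerivation, ← huniv, sum_map]
  refine sum_congr rfl fun i _ => ?_
  simp only [filter_gt_eq_Iio, Fin.coe_castLEEmb, Fin.prod_Iio_castLE]

/-- The kernel of the derivation `Δ = D_1 + x_1^{p-1}D_2 + ⋯ + x_1^{p-1}⋯x_{n-2}^{p-1}D_{n-1}`,
acting as a linear operator on `B_n`, equals the `p`-dimensional space
`K = { a_0 + a_1 x_n + ⋯ + a_{p-1} x_n^{p-1} }`. -/
theorem kernel_of_Delta
    (k : Type*) [Field k] (p n : ℕ) [CharP k p]
    (B : Type*) [CommRing B] [Algebra k B]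
    (e : (MvPolynomial (Fin n) k ⧸
        Ideal.span (Set.range fun i : Fin n => (X i : MvPolynomial (Fin n) k) ^ p)) ≃ₐ[k] B)
    (x : Fin n → B) (hx : ∀ j, x j = e (Ideal.Quotient.mk _ (X j)))
    (D : Fin n → Derivation k B B) (hD : ∀ i j, D i (x j) = if i = j then 1 else 0)
    (ℓ : Fin n) (hℓ : (ℓ : ℕ) = n - 1)
    (Δ : Derivation k B B)
    (hΔ : Δ = ∑ i : Fin (n - 1),
      (∏ j ∈ Finset.univ.filter (fun j : Fin (n - 1) => j < i),
          x (Fin.castLE (by omega : n - 1 ≤ n) j) ^ (p - 1)) •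
        D (Fin.castLE (by omega : n - 1 ≤ n) i)) :
    ∀ f : B, Δ f = 0 ↔
      f ∈ Submodule.span k (Set.range fun a : Fin p => x ℓ ^ (a : ℕ)) := by
  rw [sum_castLE_eq_deltaDerivation p x D hℓ] at hΔ
  subst hΔ
  have hxp : ∀ i, x i ^ p = 0 := fun i => by
    rw [hx, ← map_pow, ← map_pow,
      Ideal.Quotient.eq_zero_iff_mem.2 (Ideal.subset_span (Set.mem_range_self i)), map_zero]
  let b := (truncatedMonomialBasis (Fin n) k p).map e.toLinearEquiv
  have hb : ∀ a, b a = ∏ i, x i ^ (a i : ℕ) := fun a => by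
    simp [b, truncatedMonomialBasis_apply, hx]
  have htop : IsTop ℓ := fun j => Fin.le_def.2 (hℓ ▸ Nat.le_sub_one_of_lt j.isLt)
  intro f
  rw [← image_prod_pow_of_isTop htop, ← funext hb, ← ker_deltaDerivation b hb hxp hD ℓ,
    LinearMap.mem_ker, Derivation.coeFn_coe]
end

section
/- For the Witt algebra element Δ = D_1 + x_1^{p-1}D_2 + ··· + x_1^{p-1}···x_{n-2}^{p-1}D_{n-1} ∈ W_{n-1} (restricted to the case with coefficients in B_{n-1}), the subring of Δ-constants is trivial: B_{n-1}^Δ = k. -/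
open MvPolynomial Finset

/-!
The monomials `x^a = ∏ x_j ^ a_j` with all `a_j < p` form a `k`-basis of `B`. Read `a` as the
base-`p` digits of a number, `x_1` being the least significant digit, and let `i` be the lowest
nonzero digit. In `Δ(x^a)` the terms beyond `D_i` vanish, since their coefficient contains
`x_i^{p-1}` while `D_j(x^a)` still contains `x_i^{a_i}`; the `D_i` term fills the lower digits with
`p - 1` and lowers digit `i` by one. So `Δ(x^a) = a_i • x^{a - 1}` with `a_i ≠ 0` in `k`, and since
`a ↦ a - 1` is injective, `Δ` maps the nonconstant basis monomials to nonzero multiples of distinct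
basis monomials. Its kernel is therefore spanned by `x^0 = 1`.
-/

namespace Module.Basis

variable {ι R V : Type*} [CommRing R] [NoZeroDivisors R] [AddCommGroup V] [Module R V]

theorem ker_le_span_singleton (b : Basis ι R V) (L : V →ₗ[R] V) {i₀ : ι} {π : ι → ι}
    (hπ : Set.InjOn π {i₀}ᶜ) (h₀ : L (b i₀) = 0)
    (hL : ∀ i ≠ i₀, ∃ c : R, c ≠ 0 ∧ L (b i) = c • b (π i)) :
    LinearMap.ker L ≤ R ∙ b i₀ := by
  choose c hc hLc using hL
  have hcoord : ∀ i (hi : i ≠ i₀), b.coord (π i) ∘ₗ L = c i hi • b.coord i := by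
    intro i hi
    refine b.ext fun j => ?_
    by_cases hj : j = i₀
    · simp [hj, h₀, Ne.symm hi]
    · by_cases hji : j = i
      · subst hji
        simp [hLc j hj]
      · have : π j ≠ π i := fun h => hji (hπ hj hi h)
        simp [hLc j hj, this, Ne.symm hji]
  intro v hv
  rw [LinearMap.mem_ker] at hv
  have hrepr : ∀ i ≠ i₀, b.repr v i = 0 := fun i hi => by
    simpa [hv, hc i hi, eq_comm (a := (0 : R))] using LinearMap.congr_fun (hcoord i hi) v
  refine Submodule.mem_span_singleton.mpr ⟨b.repr v i₀, b.repr.injective ?_⟩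
  ext i
  by_cases hi : i = i₀
  · subst hi
    simp
  · simp [hrepr i hi, Ne.symm hi]

end Module.Basis

namespace MvPolynomial

variable {σ R : Type*} [CommRing R]

theorem basisRestrictSupport_apply (s : Set (σ →₀ ℕ)) (a : s) :
    (basisRestrictSupport R s a : MvPolynomial σ R) = monomial (a : σ →₀ ℕ) 1 := by
  classical
  suffices basisRestrictSupport R s a
      = ⟨monomial (a : σ →₀ ℕ) 1, (monomial_mem_restrictSupport R).mpr (.inl a.2)⟩ by
    rw [this]
  apply (basisRestrictSupport R s).repr.injective
  rw [Module.Basis.repr_self]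
  ext b
  change _ = coeff (b : σ →₀ ℕ) (monomial (a : σ →₀ ℕ) (1 : R))
  rw [Finsupp.single_apply, coeff_monomial]
  exact if_congr Subtype.ext_iff rfl rfl

theorem span_X_pow_eq_span_monomial (p : ℕ) :
    Ideal.span (Set.range fun i : σ => (X i : MvPolynomial σ R) ^ p)
      = Ideal.span ((fun s => monomial s (1 : R)) '' Set.range fun i => Finsupp.single i p) := by
  rw [← Set.range_comp]
  simp only [Function.comp_def, X_pow_eq_monomial]

theorem isCompl_restrictSupport_span_X_pow (p : ℕ) :
    IsCompl (restrictSupport R {a : σ →₀ ℕ | ∀ i, a i < p})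
      ((Ideal.span (Set.range fun i : σ => (X i : MvPolynomial σ R) ^ p)).restrictScalars R) := by
  have hmem : ∀ P : MvPolynomial σ R, P ∈ Ideal.span (Set.range fun i : σ => X i ^ p) ↔
      ∀ a ∈ P.support, ∃ i, p ≤ a i := by
    intro P
    rw [span_X_pow_eq_span_monomial, mem_ideal_span_monomial_image]
    simp [Finsupp.single_le_iff]
  constructor
  · rw [Submodule.disjoint_def]
    intro P hP hI
    rw [Submodule.restrictScalars_mem, hmem] at hI
    rw [mem_restrictSupport_iff] at hP
    ext a
    by_contra ha
    obtain ⟨i, hi⟩ := hI a (mem_support_iff.mpr ha)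
    exact absurd (hP (mem_support_iff.mpr ha) i) hi.not_gt
  · rw [codisjoint_iff, eq_top_iff]
    intro P _
    rw [P.as_sum]
    refine Submodule.sum_mem _ fun a _ => ?_
    by_cases ha : ∀ i, a i < p
    · exact Submodule.mem_sup_left ((monomial_mem_restrictSupport R).mpr (.inl ha))
    · refine Submodule.mem_sup_right ((hmem _).mpr fun a' ha' => ?_)
      push Not at ha
      rwa [Finset.mem_singleton.mp (support_monomial_subset ha')]

variable (σ R) in
noncomputable def quotientSpanXPowBasis (p : ℕ) :
    Module.Basis {a : σ →₀ ℕ | ∀ i, a i < p} R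
      (MvPolynomial σ R ⧸ Ideal.span (Set.range fun i : σ => (X i : MvPolynomial σ R) ^ p)) :=
  (basisRestrictSupport R _).map
    ((Submodule.quotientEquivOfIsCompl _ _ (isCompl_restrictSupport_span_X_pow p).symm).symm ≪≫ₗ
      Submodule.Quotient.restrictScalarsEquiv R _)

theorem quotientSpanXPowBasis_apply (p : ℕ) (a : {a : σ →₀ ℕ | ∀ i, a i < p}) :
    quotientSpanXPowBasis σ R p a = Ideal.Quotient.mk _ (monomial (a : σ →₀ ℕ) 1) := by
  simp [quotientSpanXPowBasis, basisRestrictSupport_apply]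

theorem quotientSpanXPowBasis_map_apply [Fintype σ] {A : Type*} [CommRing A] [Algebra R A]
    (p : ℕ) (e : (MvPolynomial σ R ⧸
      Ideal.span (Set.range fun i : σ => (X i : MvPolynomial σ R) ^ p)) ≃ₐ[R] A)
    (a : {a : σ →₀ ℕ | ∀ i, a i < p}) :
    (quotientSpanXPowBasis σ R p).map e.toLinearEquiv a
      = ∏ j, e (Ideal.Quotient.mk _ (X j)) ^ (a : σ →₀ ℕ) j := by
  rw [Module.Basis.map_apply, quotientSpanXPowBasis_apply]
  change e.toAlgHom.comp (Ideal.Quotient.mkₐ R _) _ = _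
  rw [aeval_unique (e.toAlgHom.comp (Ideal.Quotient.mkₐ R _)), aeval_monomial]
  simp [Finsupp.prod_fintype]

end MvPolynomial

namespace Derivation

variable {R A : Type*} [CommRing R] [CommRing A] [Algebra R A]

theorem sum_apply {ι : Type*} (s : Finset ι) (D : ι → Derivation R A A) (y : A) :
    (∑ i ∈ s, D i) y = ∑ i ∈ s, D i y := by
  rw [← coeFnAddMonoidHom_apply, map_sum, Finset.sum_apply]
  rfl

theorem apply_prod_pow_s8 {σ : Type*} [Fintype σ] [DecidableEq σ] (D : Derivation R A A)
    (x : σ → A) (i : σ) (hD : ∀ j, D (x j) = if i = j then 1 else 0) (a : σ → ℕ) :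
    D (∏ j, x j ^ a j) = a i • ∏ j, x j ^ Function.update a i (a i - 1) j := by
  have hrest : ∀ b : σ → ℕ, D (∏ j ∈ univ.erase i, x j ^ b j) = 0 := fun b =>
    prod_induction _ (fun y => D y = 0) (fun y z hy hz => by simp [hy, hz])
      D.map_one_eq_zero fun j hj => by simp [leibniz_pow, hD, (ne_of_mem_erase hj).symm]
  have hother : ∏ j ∈ univ.erase i, x j ^ Function.update a i (a i - 1) j
      = ∏ j ∈ univ.erase i, x j ^ a j :=
    prod_congr rfl fun j hj => by rw [Function.update_of_ne (ne_of_mem_erase hj)]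
  rw [← mul_prod_erase univ _ (mem_univ i), ← mul_prod_erase univ _ (mem_univ i), hother,
    leibniz, hrest, leibniz_pow, hD, Function.update_self]
  simp only [if_true, smul_eq_mul, nsmul_eq_mul, mul_one]
  ring

end Derivation

theorem Finsupp.exists_lowest_ne_zero {σ : Type*} [LinearOrder σ] {a : σ →₀ ℕ} (ha : a ≠ 0) :
    ∃ i, a i ≠ 0 ∧ ∀ j < i, a j = 0 := by
  obtain ⟨i, hi, hmin⟩ := a.support.exists_min_image id (Finsupp.support_nonempty_iff.mpr ha)
  refine ⟨i, Finsupp.mem_support_iff.mp hi, fun j hj => ?_⟩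
  by_contra h
  exact absurd (hmin j (Finsupp.mem_support_iff.mpr h)) (not_le.mpr hj)

section PredDigits

variable {σ : Type*} [Fintype σ] [LinearOrder σ]

/-- Subtraction of one from the number with base-`p` digits `a`, the least significant digit
sitting at the least index. -/
noncomputable def predDigits (p : ℕ) (a : σ →₀ ℕ) : σ →₀ ℕ :=
  Finsupp.equivFunOnFinite.symm fun j =>
    if ∀ l ≤ j, a l = 0 then p - 1 else if ∀ l < j, a l = 0 then a j - 1 else a j

theorem predDigits_apply (p : ℕ) {a : σ →₀ ℕ} {i : σ} (ha : a i ≠ 0)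
    (hlow : ∀ j < i, a j = 0) (j : σ) :
    predDigits p a j = if j < i then p - 1 else if j = i then a i - 1 else a j := by
  simp only [predDigits, Finsupp.coe_equivFunOnFinite_symm]
  rcases lt_trichotomy j i with hji | rfl | hij
  · rw [if_pos fun l hl => hlow l (hl.trans_lt hji), if_pos hji]
  · rw [if_neg fun h => ha (h j le_rfl), if_pos hlow, if_neg (lt_irrefl j), if_pos rfl]
  · rw [if_neg fun h => ha (h i hij.le), if_neg fun h => ha (h i hij), if_neg hij.not_gt,
      if_neg hij.ne']

theorem predDigits_lt {p : ℕ} {a : σ →₀ ℕ} (ha : ∀ i, a i < p) (j : σ) :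
    predDigits p a j < p := by
  have := ha j
  simp only [predDigits, Finsupp.coe_equivFunOnFinite_symm]
  split_ifs <;> omega

theorem predDigits_injOn (p : ℕ) :
    Set.InjOn (predDigits p) {a : σ →₀ ℕ | a ≠ 0 ∧ ∀ i, a i < p} := by
  rintro a ⟨ha, hap⟩ b ⟨hb, hbp⟩ hab
  obtain ⟨i, hai, hlowa⟩ := Finsupp.exists_lowest_ne_zero ha
  obtain ⟨i', hbi, hlowb⟩ := Finsupp.exists_lowest_ne_zero hb
  have hpa := predDigits_apply p hai hlowa
  have hpb := predDigits_apply p hbi hlowb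
  have hii' : i = i' := by
    by_contra hne
    rcases lt_or_gt_of_ne hne with h | h
    · have := congrArg (· i) hab
      simp only [hpa, hpb, h, lt_irrefl, if_true, if_false] at this
      have := hap i
      omega
    · have := congrArg (· i') hab
      simp only [hpa, hpb, h, lt_irrefl, if_true, if_false] at this
      have := hbp i'
      omega
  subst hii'
  ext j
  have := congrArg (· j) hab
  simp only [hpa, hpb] at this
  rcases lt_trichotomy j i with hj | rfl | hj
  · rw [hlowa j hj, hlowb j hj]
  · simp only [lt_irrefl, if_true, if_false] at this
    omega
  · simpa [hj.not_gt, hj.ne'] using this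

end PredDigits

section Delta

variable {R A σ : Type*} [CommRing R] [CommRing A] [Algebra R A] [Fintype σ] [LinearOrder σ]

theorem prod_filter_lt_pow_mul_prod_pow (x : σ → A) (i : σ) (c : ℕ) (b : σ → ℕ) :
    (∏ j ∈ univ.filter (· < i), x j ^ c) * ∏ j, x j ^ b j
      = ∏ j, x j ^ ((if j < i then c else 0) + b j) := by
  rw [prod_filter, ← prod_mul_distrib]
  refine prod_congr rfl fun j _ => ?_
  split_ifs <;> simp [pow_add]

theorem sum_smul_apply_prod_pow {p : ℕ} (x : σ → A) (hx : ∀ i, x i ^ p = 0)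
    (D : σ → Derivation R A A) (hD : ∀ i j, D i (x j) = if i = j then 1 else 0)
    {a : σ →₀ ℕ} {i : σ} (ha : a i ≠ 0) (hlow : ∀ j < i, a j = 0) :
    (∑ i, (∏ j ∈ univ.filter (· < i), x j ^ (p - 1)) • D i) (∏ j, x j ^ a j)
      = a i • ∏ j, x j ^ predDigits p a j := by
  have hterm : ∀ i', ((∏ j ∈ univ.filter (· < i'), x j ^ (p - 1)) • D i') (∏ j, x j ^ a j)
      = a i' • ∏ j, x j ^ ((if j < i' then p - 1 else 0) + Function.update a i' (a i' - 1) j) := by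
    intro i'
    rw [Derivation.smul_apply, (D i').apply_prod_pow_s8 x i' (hD i'), smul_eq_mul, mul_smul_comm,
      prod_filter_lt_pow_mul_prod_pow]
  rw [Derivation.sum_apply, sum_congr rfl fun i' _ => hterm i',
    sum_eq_single_of_mem i (mem_univ i)]
  · congr 2 with j
    rw [predDigits_apply p ha hlow]
    rcases lt_trichotomy j i with hji | rfl | hij
    · simp [hji, hji.ne, hlow j hji]
    · simp
    · simp [hij.not_gt, hij.ne']
  · intro i' _ hi'
    rcases lt_or_gt_of_ne hi' with hi'i | hii'
    · simp [hlow i' hi'i]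
    · have hvanish : x i ^ ((if i < i' then p - 1 else 0) + Function.update a i' (a i' - 1) i)
          = 0 := by
        refine pow_eq_zero_of_le ?_ (hx i)
        rw [if_pos hii', Function.update_of_ne hii'.ne]
        omega
      rw [prod_eq_zero (mem_univ i) hvanish, smul_zero]

theorem exists_sum_smul_apply_prod_pow_eq_smul {p : ℕ} [CharP R p] (x : σ → A)
    (hx : ∀ i, x i ^ p = 0) (D : σ → Derivation R A A)
    (hD : ∀ i j, D i (x j) = if i = j then 1 else 0) {a : σ →₀ ℕ} (ha : a ≠ 0)
    (hap : ∀ i, a i < p) :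
    ∃ c : R, c ≠ 0 ∧ (∑ i, (∏ j ∈ univ.filter (· < i), x j ^ (p - 1)) • D i) (∏ j, x j ^ a j)
      = c • ∏ j, x j ^ predDigits p a j := by
  obtain ⟨i, hai, hlow⟩ := Finsupp.exists_lowest_ne_zero ha
  refine ⟨a i, fun h => ?_, ?_⟩
  · have := Nat.le_of_dvd (Nat.pos_of_ne_zero hai) ((CharP.cast_eq_zero_iff R p _).mp h)
    exact absurd (hap i) this.not_gt
  · rw [sum_smul_apply_prod_pow x hx D hD hai hlow, Nat.cast_smul_eq_nsmul]

end Delta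

/-- Here `m` stands for the paper's `n - 1`. -/
theorem Delta_constants_trivial_general
    (k : Type*) [Field k] (p m : ℕ) [Fact (Nat.Prime p)] [CharP k p]
    (B : Type*) [CommRing B] [Algebra k B]
    (e : (MvPolynomial (Fin m) k ⧸
        Ideal.span (Set.range fun i : Fin m => (X i : MvPolynomial (Fin m) k) ^ p)) ≃ₐ[k] B)
    (x : Fin m → B) (hx : ∀ j, x j = e (Ideal.Quotient.mk _ (X j)))
    (D : Fin m → Derivation k B B) (hD : ∀ i j, D i (x j) = if i = j then 1 else 0)
    (Δ : Derivation k B B)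
    (hΔ : Δ = ∑ i : Fin m,
      (∏ j ∈ Finset.univ.filter (fun j : Fin m => j < i), x j ^ (p - 1)) • D i) :
    ∀ f : B, Δ f = 0 ↔ ∃ c : k, f = algebraMap k B c := by
  have hxp : ∀ i, x i ^ p = 0 := fun i => by
    rw [hx, ← map_pow, ← map_pow,
      Ideal.Quotient.eq_zero_iff_mem.mpr (Ideal.subset_span (Set.mem_range_self i)), map_zero]
  set b := (quotientSpanXPowBasis (Fin m) k p).map e.toLinearEquiv
  have hb : ∀ a, b a = ∏ j, x j ^ (a : Fin m →₀ ℕ) j := fun a => by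
    simpa only [← hx] using quotientSpanXPowBasis_map_apply p e a
  let a₀ : {a : Fin m →₀ ℕ | ∀ i, a i < p} := ⟨0, fun _ => (Fact.out : p.Prime).pos⟩
  let π (a : {a : Fin m →₀ ℕ | ∀ i, a i < p}) : {a : Fin m →₀ ℕ | ∀ i, a i < p} :=
    ⟨predDigits p a, predDigits_lt a.2⟩
  have hπ : Set.InjOn π {a₀}ᶜ := fun a ha a' ha' h =>
    Subtype.ext (predDigits_injOn p ⟨fun h0 => ha (Subtype.ext h0), a.2⟩
      ⟨fun h0 => ha' (Subtype.ext h0), a'.2⟩ (congrArg Subtype.val h))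
  have hshift : ∀ a ≠ a₀, ∃ c : k, c ≠ 0 ∧ Δ (b a) = c • b (π a) := fun a ha => by
    simpa [hb, hΔ] using
      exists_sum_smul_apply_prod_pow_eq_smul x hxp D hD (fun h0 => ha (Subtype.ext h0)) a.2
  intro f
  refine ⟨fun hf => ?_, by rintro ⟨c, rfl⟩; exact Δ.map_algebraMap c⟩
  obtain ⟨c, rfl⟩ := Submodule.mem_span_singleton.mp
    (b.ker_le_span_singleton (Δ : B →ₗ[k] B) hπ (by simp [a₀, hb]) hshift hf)
  exact ⟨c, by simp [a₀, hb, Algebra.algebraMap_eq_smul_one]⟩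

/-- For `Δ = D_1 + x_1^{p-1}D_2 + ⋯ + x_1^{p-1}⋯x_{n-2}^{p-1}D_{n-1} ∈ W_{n-1}`, the subring
of `Δ`-constants is trivial: `B_{n-1}^Δ = k`.  Here `m` plays the role of `n − 1` (so `m ≥ 2`),
`B` is the truncated polynomial ring in `m` variables, and `Δ = Σ_i (Π_{j<i} x_j^{p-1}) D_i`. -/
theorem Delta_constants_trivial
    (k : Type*) [Field k] (p m : ℕ) [Fact (Nat.Prime p)] [CharP k p] (hp : 3 < p)
    (hm : 2 ≤ m)
    (B : Type*) [CommRing B] [Algebra k B]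
    (e : (MvPolynomial (Fin m) k ⧸
        Ideal.span (Set.range fun i : Fin m => (X i : MvPolynomial (Fin m) k) ^ p)) ≃ₐ[k] B)
    (x : Fin m → B) (hx : ∀ j, x j = e (Ideal.Quotient.mk _ (X j)))
    (D : Fin m → Derivation k B B) (hD : ∀ i j, D i (x j) = if i = j then 1 else 0)
    (Δ : Derivation k B B)
    (hΔ : Δ = ∑ i : Fin m,
      (∏ j ∈ Finset.univ.filter (fun j : Fin m => j < i), x j ^ (p - 1)) • D i) :
    ∀ f : B, Δ f = 0 ↔ ∃ c : k, f = algebraMap k B c :=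
  Delta_constants_trivial_general k p m B e x hx D hD Δ hΔ
end

section
/- For x ∈ W_n with B_n^x = k (i.e., the only x-constants are scalars), the minimal polynomial of the linear operator ρ(x) (the action of x on B_n) equals the characteristic polynomial P(t,x) = t^{p^n} − Σ_{i=0}^{n-1} φ_i(x)t^{p^i}; in particular the minimal polynomial of ρ(x) has degree p^n. -/
/-!
The characteristic polynomial `P` is an additive polynomial, `P(t + λ) = P(t) + P(λ)`, so every
root `λ` of `P` has the same multiplicity `q` as the root `0`, and `q` is the dimension of the
generalised `0`-eigenspace `K` of `x`. Since the only constants are scalars, `x` restricted to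
`K` is a single nilpotent Jordan block. If `f` is an eigenvector of `x` with eigenvalue `λ`, the
Leibniz rule gives `(x - λ)(f b) = f x(b)`, and multiplication by `f` is injective on `K`; so
`x - λ` contains a copy of that Jordan block, and `λ` is a root of the minimal polynomial of
multiplicity at least `q`. Hence `P` divides the minimal polynomial.
-/

open Finset Polynomial Module

noncomputable def Polynomial.monicPPolynomial {k : Type*} [CommRing k] (p : ℕ) {n : ℕ}
    (c : Fin n → k) : k[X] :=
  X ^ p ^ n - ∑ i : Fin n, C (c i) * X ^ p ^ (i : ℕ)

namespace Polynomial

variable {k : Type*} [CommRing k] {p n : ℕ} (c : Fin n → k)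

theorem monicPPolynomial_comp_X_add_C [Fact p.Prime] [CharP k p] (l : k) :
    (monicPPolynomial p c).comp (X + C l) =
      monicPPolynomial p c + C ((monicPPolynomial p c).eval l) := by
  simp only [monicPPolynomial, sub_comp, sum_comp, mul_comp, C_comp, X_pow_comp,
    add_pow_char_pow, ← C_pow, eval_sub, eval_pow, eval_X, eval_finsetSum, eval_mul, eval_C,
    map_sub, map_sum, map_mul, mul_add, sum_add_distrib]
  ring

theorem rootMultiplicity_monicPPolynomial_of_isRoot [Fact p.Prime] [CharP k p] {l : k}
    (hl : (monicPPolynomial p c).IsRoot l) :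
    (monicPPolynomial p c).rootMultiplicity l = (monicPPolynomial p c).rootMultiplicity 0 := by
  rw [rootMultiplicity_eq_natTrailingDegree, monicPPolynomial_comp_X_add_C, hl.eq_zero, map_zero,
    add_zero, rootMultiplicity_eq_natTrailingDegree, map_zero, add_zero, comp_X]

theorem natDegree_monicPPolynomial [Nontrivial k] (hp : 1 < p) :
    (monicPPolynomial p c).natDegree = p ^ n := by
  refine natDegree_eq_of_degree_eq_some ?_
  rw [monicPPolynomial, degree_sub_eq_left_of_degree_lt] <;> rw [degree_X_pow]
  refine (degree_sum_le _ _).trans_lt <| (Finset.sup_lt_iff (WithBot.bot_lt_coe _)).2 fun i _ => ?_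
  exact (degree_C_mul_X_pow_le _ _).trans_lt (mod_cast Nat.pow_lt_pow_right hp i.2)

end Polynomial

namespace LinearMap

theorem aeval_eq_zero_of_comp_eq_comp {R M N : Type*} [CommRing R] [AddCommGroup M] [Module R M]
    [AddCommGroup N] [Module R N] {S : Module.End R M} {T : Module.End R N} {L : M →ₗ[R] N}
    (hL : Function.Injective L) (hST : T ∘ₗ L = L ∘ₗ S) {h : R[X]} (hT : aeval T h = 0) :
    aeval S h = 0 := by
  have hcomp : ∀ q : R[X], aeval T q ∘ₗ L = L ∘ₗ aeval S q := by
    intro q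
    induction q using Polynomial.induction_on' with
    | add q r hq hr => simp only [map_add, add_comp, comp_add, hq, hr]
    | monomial j a =>
      simp only [aeval_monomial, Module.algebraMap_end_eq_smul_id, smul_mul_assoc, smul_comp,
        comp_smul, Module.End.mul_eq_comp, id_comp, Module.End.commute_pow_left_of_commute hST]
  ext w
  apply hL
  simpa [hT] using (LinearMap.congr_fun (hcomp h) w).symm

variable {k V : Type*} [Field k] [AddCommGroup V] [Module k V]

theorem finrank_ker_comp_le [FiniteDimensional k V] (f g : V →ₗ[k] V) :
    finrank k (ker (f ∘ₗ g)) ≤ finrank k (ker f) + finrank k (ker g) := by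
  let g' := g.domRestrict (ker (f ∘ₗ g))
  have hrange : finrank k (range g') ≤ finrank k (ker f) :=
    Submodule.finrank_mono <| by rintro _ ⟨⟨v, hv⟩, rfl⟩; exact hv
  have hker : finrank k (ker g') ≤ finrank k (ker g) := by
    rw [ker_domRestrict, ← Submodule.finrank_map_subtype_eq]
    exact Submodule.finrank_mono (Submodule.map_comap_le _ _)
  have := finrank_range_add_finrank_ker g'
  omega

theorem finrank_ker_pow_le [FiniteDimensional k V] (f : V →ₗ[k] V) (j : ℕ) :
    finrank k (ker (f ^ j)) ≤ j * finrank k (ker f) := by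
  induction j with
  | zero => simp [Module.End.one_eq_id]
  | succ j ih =>
    rw [pow_succ', Module.End.mul_eq_comp, add_one_mul]
    have := finrank_ker_comp_le f (f ^ j)
    omega

theorem minpoly_eq_charpoly_of_rootMultiplicity_le [IsAlgClosed k] [FiniteDimensional k V]
    (f : Module.End k V)
    (h : ∀ l, f.charpoly.IsRoot l → f.charpoly.rootMultiplicity l ≤
      (minpoly k f).rootMultiplicity l) :
    minpoly k f = f.charpoly := by
  classical
  have hf : IsIntegral k f := Algebra.IsIntegral.isIntegral f
  refine eq_of_monic_of_associated (minpoly.monic hf) f.charpoly_monic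
    (associated_of_dvd_dvd f.minpoly_dvd_charpoly ?_)
  rw [IsAlgClosed.dvd_iff_roots_le_roots f.charpoly_monic.ne_zero (minpoly.ne_zero hf),
    Multiset.le_iff_count]
  intro l
  rw [count_roots, count_roots]
  by_cases hl : f.charpoly.IsRoot l
  · exact h l hl
  · simp [rootMultiplicity_eq_zero hl]

end LinearMap

namespace Module.End

theorem exists_pow_apply_ne_zero_mem_ker {R M : Type*} [CommRing R] [AddCommGroup M] [Module R M]
    (f : Module.End R M) {v : M} (hv : v ≠ 0) {N : ℕ} (hN : (f ^ N) v = 0) :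
    ∃ j, (f ^ j) v ≠ 0 ∧ f ((f ^ j) v) = 0 := by
  induction N generalizing v with
  | zero => exact absurd hN hv
  | succ N ih =>
    by_cases hfv : f v = 0
    · exact ⟨0, hv, hfv⟩
    obtain ⟨j, hj⟩ := ih hfv (by rwa [← Module.End.mul_apply, ← pow_succ])
    exact ⟨j + 1, by rwa [pow_succ, Module.End.mul_apply]⟩

/-- A nilpotent operator with a kernel of dimension at most one is a single Jordan block, so its
minimal polynomial is `X ^ finrank k V`. -/
theorem X_pow_finrank_dvd_of_isNilpotent {k V : Type*} [Field k] [AddCommGroup V] [Module k V]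
    [FiniteDimensional k V] {S : Module.End k V} (hS : IsNilpotent S)
    (hker : finrank k (LinearMap.ker S) ≤ 1) {h : k[X]} (hh : aeval S h = 0) :
    X ^ finrank k V ∣ h := by
  obtain ⟨N, hN⟩ := hS
  have hdvd : minpoly k S ∣ X ^ N := minpoly.dvd k S (by rw [map_pow, aeval_X, hN])
  obtain ⟨r, -, hr⟩ := (dvd_prime_pow prime_X N).1 hdvd
  have hr : minpoly k S = X ^ r :=
    eq_of_monic_of_associated (minpoly.monic (Algebra.IsIntegral.isIntegral S)) (monic_X_pow r) hr
  have hSr : S ^ r = 0 := by rw [← aeval_X (R := k) S, ← map_pow, ← hr, minpoly.aeval]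
  have hrank : finrank k V ≤ r := by
    have := LinearMap.finrank_ker_pow_le S r
    rw [hSr, LinearMap.ker_zero, finrank_top] at this
    nlinarith
  exact (pow_dvd_pow X hrank).trans (hr ▸ minpoly.dvd k S hh)

end Module.End

namespace Derivation

variable {k B : Type*} [Field k] [CommRing B] [Algebra k B]

theorem sub_algebraMap_comp_mulLeft (D : Derivation k B B) {f : B} {l : k} (hf : D f = l • f) :
    ((D : B →ₗ[k] B) - algebraMap k _ l) ∘ₗ LinearMap.mulLeft k f =
      LinearMap.mulLeft k f ∘ₗ D := by
  ext b
  simp only [LinearMap.coe_comp, Function.comp_apply, LinearMap.mulLeft_apply, LinearMap.sub_apply,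
    coeFn_coe, D.leibniz, smul_eq_mul, hf, Algebra.smul_def, algebraMap_end_apply]
  ring

theorem finrank_ker_le_one [FiniteDimensional k B] (D : Derivation k B B)
    (hconst : ∀ b, D b = 0 → ∃ c : k, b = algebraMap k B c) :
    finrank k (LinearMap.ker (D : B →ₗ[k] B)) ≤ 1 :=
  calc finrank k (LinearMap.ker (D : B →ₗ[k] B))
      _ ≤ finrank k (LinearMap.range (Algebra.linearMap k B)) :=
        Submodule.finrank_mono fun b hb => (hconst b hb).imp fun _ hc => hc.symm
      _ ≤ finrank k k := LinearMap.finrank_range_le _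
      _ = 1 := finrank_self k

/-- Going down the chain `v, D v, D² v, …` inside the generalised `0`-eigenspace ends at a
nonzero constant `c`, and `f * c ≠ 0`. -/
theorem eq_zero_of_mem_maxGenEigenspace_of_mul_eq_zero (D : Derivation k B B)
    (hconst : ∀ b, D b = 0 → ∃ c : k, b = algebraMap k B c) {f : B} (hf0 : f ≠ 0) {l : k}
    (hf : D f = l • f) {v : B}
    (hv : v ∈ Module.End.maxGenEigenspace (D : B →ₗ[k] B) 0) (hfv : f * v = 0) : v = 0 := by
  by_contra hv0
  obtain ⟨N, hN⟩ := (Module.End.mem_maxGenEigenspace _ _ _).1 hv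
  rw [zero_smul, sub_zero] at hN
  obtain ⟨j, hj0, hj⟩ := Module.End.exists_pow_apply_ne_zero_mem_ker _ hv0 hN
  obtain ⟨c, hc⟩ := hconst _ hj
  have hfc : f * ((D : B →ₗ[k] B) ^ j) v = 0 := by
    have := LinearMap.congr_fun
      (Module.End.commute_pow_left_of_commute (D.sub_algebraMap_comp_mulLeft hf) j) v
    simp only [LinearMap.comp_apply, LinearMap.mulLeft_apply, hfv, map_zero] at this
    exact this.symm
  rw [hc, Algebra.algebraMap_eq_smul_one, mul_smul_comm, mul_one, smul_eq_zero] at hfc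
  rcases hfc with hc0 | hf
  · exact hj0 (by rw [hc, hc0, map_zero])
  · exact hf0 hf

theorem rootMultiplicity_charpoly_zero_le_rootMultiplicity_minpoly [FiniteDimensional k B]
    (D : Derivation k B B) (hconst : ∀ b, D b = 0 → ∃ c : k, b = algebraMap k B c) {l : k}
    (hl : (D : B →ₗ[k] B).charpoly.IsRoot l) :
    (D : B →ₗ[k] B).charpoly.rootMultiplicity 0 ≤
      (minpoly k (D : B →ₗ[k] B)).rootMultiplicity l := by
  set A : Module.End k B := (D : B →ₗ[k] B)
  obtain ⟨f, hf⟩ := ((Module.End.hasEigenvalue_iff_isRoot_charpoly A l).2 hl).exists_hasEigenvector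
  set K := A.maxGenEigenspace 0
  let S := A.restrict (Module.End.mapsTo_maxGenEigenspace_of_comm (Commute.refl A) 0)
  have hS : IsNilpotent S := by simpa using A.isNilpotent_restrict_maxGenEigenspace_sub_algebraMap 0
  have hkerS : finrank k (LinearMap.ker S) ≤ 1 := by
    rw [show LinearMap.ker S = _ from LinearMap.ker_restrict _,
      ← Submodule.finrank_map_subtype_eq]
    exact (Submodule.finrank_mono (Submodule.map_comap_le _ _)).trans (D.finrank_ker_le_one hconst)
  have hSm : aeval S ((minpoly k A).comp (X + C l)) = 0 := by
    refine LinearMap.aeval_eq_zero_of_comp_eq_comp (L := LinearMap.mulLeft k f ∘ₗ K.subtype)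
      (T := A - algebraMap k _ l) ?_ ?_ ?_
    · rw [← LinearMap.ker_eq_bot, LinearMap.ker_eq_bot']
      exact fun v hv => Subtype.ext <|
        D.eq_zero_of_mem_maxGenEigenspace_of_mul_eq_zero hconst hf.2 hf.apply_eq_smul v.2 hv
    · rw [← LinearMap.comp_assoc, D.sub_algebraMap_comp_mulLeft hf.apply_eq_smul]
      rfl
    · rw [aeval_comp, map_add, aeval_X, aeval_C, sub_add_cancel, minpoly.aeval]
  rw [← LinearMap.finrank_maxGenEigenspace_eq,
    le_rootMultiplicity_iff (minpoly.ne_zero (Algebra.IsIntegral.isIntegral A)), X_sub_C_pow_dvd_iff]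
  exact Module.End.X_pow_finrank_dvd_of_isNilpotent hS hkerS hSm

end Derivation

theorem minimal_polynomial_eq_characteristic_polynomial_general
    (k : Type*) [Field k] [IsAlgClosed k] (p n : ℕ) [Fact (Nat.Prime p)] [CharP k p]
    (B : Type*) [CommRing B] [Algebra k B] [Module.Finite k B]
    (φ : Fin n → Derivation k B B → k)
    (hφ : ∀ y : Derivation k B B,
      LinearMap.charpoly (y : B →ₗ[k] B) =
        X ^ (p ^ n) - ∑ i : Fin n, C (φ i y) * X ^ (p ^ (i : ℕ)))
    (x : Derivation k B B)
    (hconst : ∀ f : B, x f = 0 ↔ ∃ c : k, f = algebraMap k B c) :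
    minpoly k ((x : B →ₗ[k] B)) = LinearMap.charpoly (x : B →ₗ[k] B) ∧
      (minpoly k ((x : B →ₗ[k] B))).natDegree = p ^ n := by
  have hP : LinearMap.charpoly (x : B →ₗ[k] B) = monicPPolynomial p fun i => φ i x := hφ x
  have hmin : minpoly k (x : B →ₗ[k] B) = LinearMap.charpoly (x : B →ₗ[k] B) := by
    refine LinearMap.minpoly_eq_charpoly_of_rootMultiplicity_le _ fun l hl => ?_
    calc _ = (LinearMap.charpoly (x : B →ₗ[k] B)).rootMultiplicity 0 := by
          rw [hP] at hl ⊢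
          exact rootMultiplicity_monicPPolynomial_of_isRoot _ hl
      _ ≤ _ := x.rootMultiplicity_charpoly_zero_le_rootMultiplicity_minpoly
          (fun b hb => (hconst b).1 hb) hl
  refine ⟨hmin, ?_⟩
  rw [hmin, hP, natDegree_monicPPolynomial _ (Fact.out : p.Prime).one_lt]

/-- For `x ∈ W_n` with `B_n^x = k` (the only `x`-constants are scalars), the minimal polynomial
of the linear operator `ρ(x)` equals the characteristic polynomial
`P(t,x) = t^{p^n} − Σ_{i=0}^{n-1} φ_i(x) t^{p^i}`; in particular it has degree `p^n`. -/
theorem minimal_polynomial_eq_characteristic_polynomial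
    (k : Type*) [Field k] [IsAlgClosed k] (p n : ℕ) [Fact (Nat.Prime p)] [CharP k p]
    (hp : 3 < p) (hn : 3 ≤ n)
    (B : Type*) [CommRing B] [Algebra k B] [Module.Finite k B]
    (e : (MvPolynomial (Fin n) k ⧸
        Ideal.span (Set.range fun i : Fin n => (MvPolynomial.X i : MvPolynomial (Fin n) k) ^ p)) ≃ₐ[k] B)
    (φ : Fin n → Derivation k B B → k)
    (hφ : ∀ y : Derivation k B B,
      LinearMap.charpoly (y : B →ₗ[k] B) =
        X ^ (p ^ n) - ∑ i : Fin n, C (φ i y) * X ^ (p ^ (i : ℕ)))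
    (x : Derivation k B B)
    (hconst : ∀ f : B, x f = 0 ↔ ∃ c : k, f = algebraMap k B c) :
    minpoly k ((x : B →ₗ[k] B)) = LinearMap.charpoly (x : B →ₗ[k] B) ∧
      (minpoly k ((x : B →ₗ[k] B))).natDegree = p ^ n :=
  minimal_polynomial_eq_characteristic_polynomial_general k p n B φ hφ x hconst
end

section
/- The adjoint quotient map evaluated at Δ_ε gives exactly ε: the coefficients of the minimal (equal to characteristic) p-polynomial of Δ_ε satisfy φ'_i(Δ_ε) = ε_{i+1} for i = 0,...,n−2, i.e. Δ_ε^{p^{n-1}} = Σ_{i=0}^{n-2} ε_{i+1}Δ_ε^{p^i}. -/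
/-!
Order the standard monomials `x^a` (`0 ≤ aⱼ < p`) of `B` by the integer `N = Σ aⱼ pʲ` whose
base-`p` digits are the exponents. The operator `Δ_ε` acts as an odometer: it sends the monomial
of `N` to `d(N)` times the monomial of `N - 1`, where `d(N)` is the lowest nonzero digit of `N`,
plus, for `N = pⁱ` only, `±εᵢ` times the top monomial. Hence the top monomial is a cyclic vector,
and applying Cayley–Hamilton to it and reading off the coefficients of the linearly independent
vectors `Δ_ε^{pⁱ}(top)` gives `φ'ᵢ(Δ_ε) = ±εᵢ ∏ d(K)`, the product over `pⁱ < K < pᵐ`. That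
product is `(-1)^(m-i)` by Wilson's theorem: the block `pt < K ≤ p(t+1)` contributes
`(p-1)! · d(t+1) = -d(t+1)`.
-/

open Finset Polynomial

namespace AdjointQuotient

section Digits

def digit (p N i : ℕ) : ℕ := N / p ^ i % p

/-- The lowest nonzero base-`p` digit of `N`; it is `0` for `N = 0`. -/
def lowestDigit (p N : ℕ) : ℕ := digit p N (padicValNat p N)

lemma sub_one_mod {p Q : ℕ} (hp : 0 < p) (hQ : Q ≠ 0) :
    (Q - 1) % p = if Q % p = 0 then p - 1 else Q % p - 1 := by
  have hlt := Nat.mod_lt (Q - 1) hp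
  have hQmod : ((Q - 1) % p + 1) % p = Q % p := by
    rw [Nat.mod_add_mod, Nat.sub_add_cancel (Nat.one_le_iff_ne_zero.2 hQ)]
  rcases (show (Q - 1) % p + 1 < p ∨ (Q - 1) % p + 1 = p by omega) with h | h
  · rw [Nat.mod_eq_of_lt h] at hQmod
    rw [if_neg (by omega)]; omega
  · rw [h, Nat.mod_self] at hQmod
    rw [if_pos hQmod.symm]; omega

variable {p : ℕ}

lemma digit_eq_zero_of_lt_padicValNat {N j : ℕ} (hj : j < padicValNat p N) : digit p N j = 0 := by
  have hdvd : p ^ j * p ∣ N := (pow_succ p j ▸ pow_dvd_pow p hj).trans pow_padicValNat_dvd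
  exact Nat.mod_eq_zero_of_dvd (Nat.dvd_div_of_mul_dvd hdvd)

lemma exists_digit_eq {m : ℕ} (a : Fin m → ℕ) (ha : ∀ j, a j < p) :
    ∃ N < p ^ m, ∀ j : Fin m, digit p N j = a j :=
  ⟨finFunctionFinEquiv (fun j => ⟨a j, ha j⟩), Fin.is_lt _, fun j => by
    rw [digit, ← finFunctionFinEquiv_symm_apply_val, Equiv.symm_apply_apply]⟩

lemma lowestDigit_of_not_dvd {N : ℕ} (h : ¬ p ∣ N) : lowestDigit p N = N % p := by
  rw [lowestDigit, padicValNat.eq_zero_of_not_dvd h, digit, pow_zero, Nat.div_one]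

lemma sum_digit_mul_pow {m N : ℕ} (hN : N < p ^ m) :
    ∑ j : Fin m, digit p N j * p ^ (j : ℕ) = N := by
  have := congrArg Fin.val (finFunctionFinEquiv.apply_symm_apply (⟨N, hN⟩ : Fin (p ^ m)))
  simpa only [finFunctionFinEquiv_apply, finFunctionFinEquiv_symm_apply_val, digit] using this

variable [hp : Fact p.Prime]

lemma digit_lt (N i : ℕ) : digit p N i < p := Nat.mod_lt _ hp.out.pos

lemma lowestDigit_ne_zero {N : ℕ} (hN : N ≠ 0) : lowestDigit p N ≠ 0 := fun h =>
  pow_succ_padicValNat_not_dvd hN <|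
    pow_succ p _ ▸ Nat.mul_dvd_of_dvd_div pow_padicValNat_dvd (Nat.dvd_of_mod_eq_zero h)

lemma digit_sub_one_of_le {N j : ℕ} (hN : N ≠ 0) (hj : j ≤ padicValNat p N) :
    digit p (N - 1) j = if digit p N j = 0 then p - 1 else digit p N j - 1 := by
  have hdvd : p ^ j ∣ N := (padicValNat_dvd_iff_le hN).2 hj
  have hdiv : (N - 1) / p ^ j = N / p ^ j - 1 := by
    have := Nat.succ_div (a := N - 1) (b := p ^ j)
    rw [Nat.sub_add_cancel (Nat.one_le_iff_ne_zero.2 hN), if_pos hdvd] at this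
    exact Nat.eq_sub_of_add_eq this.symm
  have hpos : N / p ^ j ≠ 0 :=
    (Nat.div_pos (Nat.le_of_dvd (Nat.pos_of_ne_zero hN) hdvd) (pow_pos hp.out.pos j)).ne'
  rw [digit, hdiv, sub_one_mod hp.out.pos hpos]
  rfl

lemma digit_sub_one_of_lt {N j : ℕ} (hN : N ≠ 0) (hj : padicValNat p N < j) :
    digit p (N - 1) j = digit p N j := by
  have hndvd : ¬ p ^ j ∣ N := fun h => (padicValNat_dvd_iff_le hN).1 h |>.not_gt hj
  have := Nat.succ_div (a := N - 1) (b := p ^ j)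
  rw [Nat.sub_add_cancel (Nat.one_le_iff_ne_zero.2 hN), if_neg hndvd, add_zero] at this
  rw [digit, digit, this]

lemma digit_sub_one {N : ℕ} (hN : N ≠ 0) (j : ℕ) :
    digit p (N - 1) j = (if j < padicValNat p N then p - 1 else 0) +
      (digit p N j - if j = padicValNat p N then 1 else 0) := by
  rcases lt_trichotomy j (padicValNat p N) with h | rfl | h
  · rw [digit_sub_one_of_le hN h.le, digit_eq_zero_of_lt_padicValNat h, if_pos rfl, if_pos h,
      if_neg h.ne, Nat.sub_zero, add_zero]
  · have hlow : digit p N (padicValNat p N) ≠ 0 := lowestDigit_ne_zero hN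
    rw [digit_sub_one_of_le hN le_rfl, if_neg hlow, if_neg (lt_irrefl _), if_pos rfl, zero_add]
  · rw [digit_sub_one_of_lt hN h, if_neg (by omega), if_neg (by omega), zero_add, Nat.sub_zero]

lemma digit_pow (i j : ℕ) : digit p (p ^ i) j = if j = i then 1 else 0 := by
  have h1 := hp.out.one_lt
  rcases lt_trichotomy j i with h | rfl | h
  · rw [if_neg h.ne, digit, Nat.pow_div h.le hp.out.pos]
    exact Nat.mod_eq_zero_of_dvd (dvd_pow_self p (by omega))
  · rw [if_pos rfl, digit, Nat.div_self (pow_pos hp.out.pos j), Nat.mod_eq_of_lt h1]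
  · rw [if_neg h.ne', digit, Nat.div_eq_of_lt (Nat.pow_lt_pow_right h1 h), Nat.zero_mod]

lemma digit_pow_sub_one {m j : ℕ} (hj : j < m) : digit p (p ^ m - 1) j = p - 1 := by
  rw [digit_sub_one_of_le (pow_ne_zero m hp.out.ne_zero) (by rw [padicValNat.prime_pow]; omega),
    digit_pow, if_neg hj.ne, if_pos rfl]

lemma digit_eq_single_iff {m N : ℕ} (hN : N < p ^ m) (i : Fin m) :
    (fun j : Fin m => digit p N j) = Pi.single i 1 ↔ N = p ^ (i : ℕ) := by
  constructor
  · intro h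
    rw [← sum_digit_mul_pow hN, Finset.sum_congr rfl fun j _ => by rw [congrFun h j]]
    simp [Pi.single_apply]
  · rintro rfl
    ext j
    simp [digit_pow, Pi.single_apply, Fin.val_inj]

lemma padicValNat_lt {m N : ℕ} (hN0 : N ≠ 0) (hN : N < p ^ m) : padicValNat p N < m :=
  (Nat.pow_lt_pow_iff_right hp.out.one_lt).1 <|
    (Nat.le_of_dvd (Nat.pos_of_ne_zero hN0) pow_padicValNat_dvd).trans_lt hN

lemma lowestDigit_mul_left {N : ℕ} (hN : N ≠ 0) : lowestDigit p (p * N) = lowestDigit p N := by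
  rw [lowestDigit, lowestDigit, padicValNat.mul hp.out.ne_zero hN, padicValNat.self hp.out.one_lt,
    digit, digit, add_comm, pow_succ', Nat.mul_div_mul_left _ _ hp.out.pos]

lemma lowestDigit_pow (i : ℕ) : lowestDigit p (p ^ i) = 1 := by
  rw [lowestDigit, padicValNat.prime_pow, digit_pow, if_pos rfl]

end Digits

section WilsonProduct

variable (k : Type*) [Field k] {p : ℕ} [hp : Fact p.Prime] [CharP k p]

lemma lowestDigit_cast_ne_zero {N : ℕ} (hN : N ≠ 0) : (lowestDigit p N : k) ≠ 0 := by
  rw [Ne, CharP.cast_eq_zero_iff k p]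
  exact fun h => lowestDigit_ne_zero hN (Nat.eq_zero_of_dvd_of_lt h (digit_lt N _))

lemma factorial_pred_cast : ((p - 1).factorial : k) = -1 := by
  rw [← map_natCast (ZMod.castHom (dvd_refl p) k), ZMod.wilsons_lemma, map_neg, map_one]

lemma prod_lowestDigit_mul (t : ℕ) :
    ∏ K ∈ range (p * t), (lowestDigit p (K + 1) : k) =
      (-1) ^ t * ∏ K ∈ range t, (lowestDigit p (K + 1) : k) := by
  induction t with
  | zero => simp
  | succ t ih =>
    have hblock : ∏ r ∈ range p, (lowestDigit p (p * t + r + 1) : k) =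
        -(lowestDigit p (t + 1) : k) := by
      have hp1 : p = p - 1 + 1 := (Nat.sub_add_cancel hp.out.one_le).symm
      have hlow : ∀ r ∈ range (p - 1), lowestDigit p (p * t + r + 1) = r + 1 := fun r hr => by
        have hr : r + 1 < p := by rw [mem_range] at hr; omega
        rw [add_assoc, lowestDigit_of_not_dvd, Nat.mul_add_mod, Nat.mod_eq_of_lt hr]
        rw [Nat.dvd_add_right (dvd_mul_right p t)]
        exact Nat.not_dvd_of_pos_of_lt r.succ_pos hr
      rw [hp1, prod_range_succ, ← hp1, prod_congr rfl fun r hr => by rw [hlow r hr],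
        ← Nat.cast_prod, prod_range_add_one_eq_factorial, factorial_pred_cast,
        show p * t + (p - 1) + 1 = p * (t + 1) by rw [mul_add]; omega,
        lowestDigit_mul_left t.succ_ne_zero, neg_one_mul]
    rw [mul_add, mul_one, prod_range_add, ih, hblock, prod_range_succ]
    ring

lemma prod_lowestDigit_pow (j : ℕ) :
    ∏ K ∈ range (p ^ j), (lowestDigit p (K + 1) : k) = (-1) ^ j := by
  induction j with
  | zero => simp [show lowestDigit p 1 = 1 from lowestDigit_pow 0]
  | succ j ih =>
    rw [pow_succ', prod_lowestDigit_mul, ih, neg_one_pow_char_pow, pow_succ, mul_comm]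

lemma prod_lowestDigit_between {m i : ℕ} (hi : i < m) :
    ∏ l ∈ range (p ^ m - 1 - p ^ i), (lowestDigit p (p ^ m - 1 - l) : k) = (-1) ^ (m - i) := by
  set N := p ^ m - 1 - p ^ i
  have hpm : p ^ m = p ^ i + (N + 1) := by
    have := Nat.pow_lt_pow_right hp.out.one_lt hi; omega
  have hreflect : ∏ l ∈ range N, (lowestDigit p (p ^ m - 1 - l) : k) =
      ∏ l ∈ range N, (lowestDigit p (p ^ i + l + 1) : k) := by
    rw [← prod_range_reflect (fun l => (lowestDigit p (p ^ i + l + 1) : k))]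
    exact prod_congr rfl fun l hl => by rw [mem_range] at hl; congr 2; omega
  have htotal := prod_lowestDigit_pow k m
  rw [hpm, prod_range_add, prod_lowestDigit_pow, prod_range_succ,
    show p ^ i + N + 1 = p ^ m by omega, lowestDigit_pow, Nat.cast_one, mul_one, ← hreflect] at htotal
  refine mul_left_cancel₀ (pow_ne_zero i (neg_ne_zero.2 one_ne_zero)) ?_
  rw [htotal, ← pow_add, Nat.add_sub_cancel' hi.le]

end WilsonProduct

section CyclicVector

variable {K V : Type*} [Field K] [AddCommGroup V] [Module K V] {T : V →ₗ[K] V} {w : ℕ → V}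
  {γ β : ℕ → K}

lemma pow_apply_eq_of_apply_eq (hw : ∀ j, T (w j) = γ j • w (j + 1) + β j • w 0) (j : ℕ) :
    (T ^ j) (w 0) = (∏ l ∈ range j, γ l) • w j +
      ∑ l ∈ range j, ((∏ i ∈ range l, γ i) * β l) • (T ^ (j - 1 - l)) (w 0) := by
  induction j with
  | zero => simp
  | succ j ih =>
    have hshift : ∀ l ∈ range j, T ((T ^ (j - 1 - l)) (w 0)) = (T ^ (j - l)) (w 0) :=
      fun l hl => by
        rw [← Module.End.mul_apply, ← pow_succ']
        congr 2
        rw [mem_range] at hl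
        omega
    rw [pow_succ', Module.End.mul_apply, ih, map_add, map_smul, map_sum, hw, smul_add, smul_smul,
      smul_smul, prod_range_succ, sum_range_succ, Nat.add_sub_cancel, Nat.sub_self, pow_zero,
      Module.End.one_apply]
    simp only [map_smul]
    rw [sum_congr rfl fun l hl => by rw [hshift l hl]]
    abel

lemma mem_span_pow_apply (hw : ∀ j, T (w j) = γ j • w (j + 1) + β j • w 0) {n j : ℕ}
    (hj : j < n) (hγ : ∀ l < j, γ l ≠ 0) :
    w j ∈ Submodule.span K (Set.range fun i : Fin n => (T ^ (i : ℕ)) (w 0)) := by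
  have hmem : ∀ i < n,
      (T ^ i) (w 0) ∈ Submodule.span K (Set.range fun i : Fin n => (T ^ (i : ℕ)) (w 0)) :=
    fun i hi => Submodule.subset_span ⟨⟨i, hi⟩, rfl⟩
  rw [← Submodule.smul_mem_iff _ (prod_ne_zero_iff.2 fun l hl => hγ l (mem_range.1 hl)),
    eq_sub_of_add_eq (pow_apply_eq_of_apply_eq hw j).symm]
  refine Submodule.sub_mem _ (hmem j hj) (Submodule.sum_mem _ fun l hl => Submodule.smul_mem _ _ ?_)
  exact hmem _ (by omega)

lemma linearIndependent_pow_apply [FiniteDimensional K V]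
    (hw : ∀ j, T (w j) = γ j • w (j + 1) + β j • w 0) {n : ℕ} (hγ : ∀ l, l + 1 < n → γ l ≠ 0)
    (hspan : ⊤ ≤ Submodule.span K (Set.range fun j : Fin n => w j))
    (hrank : Module.finrank K V = n) :
    LinearIndependent K fun i : Fin n => (T ^ (i : ℕ)) (w 0) := by
  refine linearIndependent_of_top_le_span_of_card_eq_finrank (hspan.trans ?_) (by simp [hrank])
  rw [Submodule.span_le]
  rintro _ ⟨j, rfl⟩
  exact mem_span_pow_apply hw j.isLt fun l hl => hγ l (by omega)

theorem coeff_eq_of_pow_eq_sum [FiniteDimensional K V] {ι : Type*} [Fintype ι] {n : ℕ}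
    {e : ι → ℕ} (he : Function.Injective e) (hen : ∀ i, e i < n) {s φ : ι → K}
    (hw : ∀ j, T (w j) = γ j • w (j + 1) + (∑ i, if n - 1 - j = e i then s i else 0) • w 0)
    (hγ : ∀ l, l + 1 < n → γ l ≠ 0) (hγn : ∏ l ∈ range n, γ l = 0)
    (hspan : ⊤ ≤ Submodule.span K (Set.range fun j : Fin n => w j))
    (hrank : Module.finrank K V = n) (hT : T ^ n = ∑ i, φ i • T ^ (e i)) (i : ι) :
    φ i = (∏ l ∈ range (n - 1 - e i), γ l) * s i := by
  have hrel : (T ^ n) (w 0) =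
      ∑ i, ((∏ l ∈ range (n - 1 - e i), γ l) * s i) • (T ^ (e i)) (w 0) := by
    rw [pow_apply_eq_of_apply_eq hw n, hγn, zero_smul, zero_add]
    simp_rw [mul_sum, sum_smul]
    rw [sum_comm]
    refine sum_congr rfl fun i _ => ?_
    have hi := hen i
    rw [sum_eq_single (n - 1 - e i) (fun l hl hne => by
      rw [if_neg (by rw [mem_range] at hl; omega), mul_zero, zero_smul])
      (fun h => absurd (mem_range.2 (by omega)) h), if_pos (by omega),
      show n - 1 - (n - 1 - e i) = e i by omega]
  have hind := (linearIndependent_pow_apply hw hγ hspan hrank).comp (fun i => ⟨e i, hen i⟩)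
    fun i j hij => he (Fin.val_eq_of_eq hij)
  refine Fintype.linearIndependent_iffₛ.1 hind φ
    (fun i => (∏ l ∈ range (n - 1 - e i), γ l) * s i) ?_ i
  simp only [Function.comp_apply]
  rw [← hrel, hT, LinearMap.sum_apply]
  rfl

end CyclicVector

section Monomials

variable {B : Type*} [CommRing B] {m : ℕ} (x : Fin m → B)

def mono (a : Fin m → ℕ) : B := ∏ i, x i ^ a i

lemma mono_zero : mono x 0 = 1 := by simp [mono]

lemma mono_add (a b : Fin m → ℕ) : mono x (a + b) = mono x a * mono x b := by
  simp [mono, pow_add, prod_mul_distrib]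

lemma mono_single (i : Fin m) : mono x (Pi.single i 1) = x i := by
  rw [mono, Fintype.prod_eq_single i fun j hj => by rw [Pi.single_eq_of_ne hj, pow_zero],
    Pi.single_eq_same, pow_one]

variable {x} {p : ℕ}

lemma mono_eq_zero (hx : ∀ i, x i ^ p = 0) {a : Fin m → ℕ} {i : Fin m} (h : p ≤ a i) :
    mono x a = 0 :=
  prod_eq_zero (mem_univ i) (by rw [← Nat.add_sub_cancel' h, pow_add, hx, zero_mul])

variable {k : Type*} [CommRing k] [Algebra k B] {D : Fin m → Derivation k B B}

lemma derivation_apply_mono (hD : ∀ i j, D i (x j) = if i = j then 1 else 0) (i : Fin m)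
    (a : Fin m → ℕ) : D i (mono x a) = a i • mono x (a - Pi.single i 1) := by
  have hrest : D i (∏ j ∈ univ.erase i, x j ^ a j) = 0 :=
    prod_induction _ (fun b => D i b = 0) (fun b c hb hc => by simp [hb, hc])
      (D i).map_one_eq_zero fun j hj => by
        rw [Derivation.leibniz_pow, hD, if_neg (ne_of_mem_erase hj).symm, smul_zero, smul_zero]
  have hsub : ∏ j ∈ univ.erase i, x j ^ (a - Pi.single i 1 : Fin m → ℕ) j =
      ∏ j ∈ univ.erase i, x j ^ a j :=
    prod_congr rfl fun j hj => by simp [Pi.single_eq_of_ne (ne_of_mem_erase hj)]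
  rw [mono, mono, ← mul_prod_erase univ _ (mem_univ i), ← mul_prod_erase univ _ (mem_univ i),
    hsub, Derivation.leibniz, hrest, Derivation.leibniz_pow, hD, if_pos rfl]
  simp only [Pi.sub_apply, Pi.single_eq_same, smul_eq_mul, mul_one, nsmul_eq_mul]
  ring

lemma mono_smul_derivation_apply_mono (hD : ∀ i j, D i (x j) = if i = j then 1 else 0)
    (c : Fin m → ℕ) (i : Fin m) (a : Fin m → ℕ) :
    (mono x c • D i) (mono x a) = a i • mono x (c + (a - Pi.single i 1)) := by
  rw [Derivation.smul_apply, derivation_apply_mono hD, smul_eq_mul, mul_smul_comm, mono_add]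

lemma top_smul_derivation_apply_mono (hx : ∀ i, x i ^ p = 0)
    (hD : ∀ i j, D i (x j) = if i = j then 1 else 0) (i : Fin m) (a : Fin m → ℕ) :
    (mono x (fun _ => p - 1) • D i) (mono x a) =
      if a = Pi.single i 1 then mono x (fun _ => p - 1) else 0 := by
  rw [mono_smul_derivation_apply_mono hD]
  split_ifs with ha
  · subst ha
    simp
  rcases Nat.eq_zero_or_pos (a i) with hai | hai
  · rw [hai, zero_smul]
  obtain ⟨j, hj⟩ := Function.ne_iff.1 ha
  rw [mono_eq_zero hx (i := j), smul_zero]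
  by_cases hji : j = i
  · subst hji
    simp only [Pi.single_eq_same] at hj ⊢
    simp only [Pi.add_apply, Pi.sub_apply, Pi.single_eq_same]
    omega
  · simp only [Pi.single_eq_of_ne hji] at hj
    simp only [Pi.add_apply, Pi.sub_apply, Pi.single_eq_of_ne hji]
    omega

end Monomials

section DigitMonomials

variable {k B : Type*} [CommRing k] [CommRing B] [Algebra k B] {m p : ℕ}
  {x : Fin m → B} {D : Fin m → Derivation k B B}

variable (p x) in
def digitMono (N : ℕ) : B := mono x fun j => digit p N j

lemma mono_mem_span_digitMono (hx : ∀ i, x i ^ p = 0) (a : Fin m → ℕ) :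
    mono x a ∈ Submodule.span k (Set.range fun N : Fin (p ^ m) => digitMono p x N) := by
  by_cases ha : ∀ j, a j < p
  · obtain ⟨N, hN, hdigit⟩ := exists_digit_eq a ha
    exact Submodule.subset_span ⟨⟨N, hN⟩, congrArg (mono x) (funext hdigit)⟩
  · obtain ⟨j, hj⟩ := not_forall.1 ha
    rw [mono_eq_zero hx (not_lt.1 hj)]
    exact Submodule.zero_mem _

lemma top_le_span_digitMono (hx : ∀ i, x i ^ p = 0)
    (hgen : Function.Surjective (MvPolynomial.aeval x : MvPolynomial (Fin m) k →ₐ[k] B)) :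
    ⊤ ≤ Submodule.span k (Set.range fun N : Fin (p ^ m) => digitMono p x N) := by
  set S := Submodule.span k (Set.range fun N : Fin (p ^ m) => digitMono p x N)
  have hmul : ∀ z ∈ S, ∀ i, z * x i ∈ S := fun z hz i => by
    induction hz using Submodule.span_induction with
    | mem z hz =>
      obtain ⟨N, rfl⟩ := hz
      change mono x _ * x i ∈ S
      rw [← mono_single x i, ← mono_add]
      exact mono_mem_span_digitMono hx _
    | zero => simp
    | add z z' _ _ hz hz' => simpa [add_mul] using S.add_mem hz hz'
    | smul c z _ hz => simpa [smul_mul_assoc] using S.smul_mem c hz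
  rintro b -
  obtain ⟨P, rfl⟩ := hgen b
  induction P using MvPolynomial.induction_on with
  | C a =>
    rw [MvPolynomial.aeval_C, Algebra.algebraMap_eq_smul_one, ← mono_zero x]
    exact S.smul_mem a (mono_mem_span_digitMono hx 0)
  | add P Q hP hQ => simpa using S.add_mem hP hQ
  | mul_X P i hP => simpa using hmul _ hP i

variable [hp : Fact p.Prime]

lemma derivation_sum_apply {ι : Type*} (s : Finset ι) (D' : ι → Derivation k B B) (b : B) :
    (∑ i ∈ s, D' i) b = ∑ i ∈ s, D' i b := by
  rw [← Derivation.coeFnAddMonoidHom_apply, map_sum, Finset.sum_apply]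
  rfl

lemma lower_sum_apply_digitMono (hx : ∀ i, x i ^ p = 0)
    (hD : ∀ i j, D i (x j) = if i = j then 1 else 0) {N : ℕ} (hN : N < p ^ m) :
    (∑ i : Fin m, (∏ j ∈ univ.filter (fun j : Fin m => j < i), x j ^ (p - 1)) • D i)
        (digitMono p x N) = (lowestDigit p N : k) • digitMono p x (N - 1) := by
  have hlower : ∀ i : Fin m, ∏ j ∈ univ.filter (fun j : Fin m => j < i), x j ^ (p - 1) =
      mono x fun j => if j < i then p - 1 else 0 := fun i => by
    rw [prod_filter, mono]
    exact prod_congr rfl fun j _ => by split_ifs <;> simp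
  rw [derivation_sum_apply]
  simp_rw [hlower, digitMono, mono_smul_derivation_apply_mono hD]
  rcases eq_or_ne N 0 with rfl | hN0
  · simp [digit, lowestDigit]
  have hv : padicValNat p N < m := padicValNat_lt hN0 hN
  rw [sum_eq_single ⟨padicValNat p N, hv⟩]
  · rw [← Nat.cast_smul_eq_nsmul k]
    congr 2
    funext j
    simp [digit_sub_one hN0, Pi.single_apply, Fin.lt_def, Fin.ext_iff]
  · intro i _ hi
    rcases lt_or_gt_of_ne hi with h | h
    · rw [digit_eq_zero_of_lt_padicValNat h, zero_smul]
    · rw [mono_eq_zero hx (i := ⟨padicValNat p N, hv⟩), smul_zero]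
      have hlow : digit p N (padicValNat p N) ≠ 0 := lowestDigit_ne_zero hN0
      simp only [Pi.add_apply, Pi.sub_apply, if_pos h, Pi.single_eq_of_ne h.ne]
      omega
  · simp

lemma top_sum_apply_digitMono (hx : ∀ i, x i ^ p = 0)
    (hD : ∀ i j, D i (x j) = if i = j then 1 else 0) (s : Fin m → k) {N : ℕ} (hN : N < p ^ m) :
    (∑ i : Fin m, s i • ((∏ j : Fin m, x j ^ (p - 1)) • D i)) (digitMono p x N) =
      (∑ i : Fin m, if N = p ^ (i : ℕ) then s i else 0) • digitMono p x (p ^ m - 1) := by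
  have htop : digitMono p x (p ^ m - 1) = mono x fun _ => p - 1 :=
    congrArg (mono x) (funext fun j => digit_pow_sub_one j.isLt)
  rw [derivation_sum_apply, sum_smul]
  refine sum_congr rfl fun i _ => ?_
  rw [Derivation.smul_apply, show ∏ j, x j ^ (p - 1) = mono x fun _ => p - 1 from rfl, digitMono,
    top_smul_derivation_apply_mono hx hD, htop]
  simp only [digit_eq_single_iff hN]
  split_ifs <;> simp

end DigitMonomials

section Charpoly

variable {K V : Type*} [Field K] [AddCommGroup V] [Module K V] [FiniteDimensional K V]
  {f : V →ₗ[K] V} {ι : Type*} [Fintype ι] {n : ℕ} {c : ι → K} {e : ι → ℕ}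

lemma finrank_eq_of_charpoly_eq (h : f.charpoly = X ^ n - ∑ i, C (c i) * X ^ (e i))
    (he : ∀ i, e i < n) : Module.finrank K V = n := by
  have hlt : (∑ i, C (c i) * X ^ (e i)).degree < (X ^ n : K[X]).degree := by
    rw [degree_X_pow]
    refine (degree_sum_le _ _).trans_lt ((Finset.sup_lt_iff (WithBot.bot_lt_coe n)).2 fun i _ => ?_)
    exact (degree_C_mul_X_pow_le _ _).trans_lt (WithBot.coe_lt_coe.2 (he i))
  rw [← f.charpoly_natDegree, h]
  exact natDegree_eq_of_degree_eq_some
    ((degree_sub_eq_left_of_degree_lt hlt).trans (degree_X_pow n))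

lemma pow_eq_sum_of_charpoly_eq (h : f.charpoly = X ^ n - ∑ i, C (c i) * X ^ (e i)) :
    f ^ n = ∑ i, c i • f ^ (e i) := by
  have hCH := f.aeval_self_charpoly
  rw [h, map_sub, map_pow, aeval_X, map_sum, sub_eq_zero] at hCH
  rw [hCH]
  refine Finset.sum_congr rfl fun i _ => ?_
  rw [map_mul, aeval_C, map_pow, aeval_X, Algebra.smul_def]

end Charpoly

theorem coeff_eq_neg_one_pow_mul_of_pow_eq_sum {k V : Type*} [Field k] {p m : ℕ} [hp : Fact p.Prime] [CharP k p]
    [AddCommGroup V] [Module k V] [FiniteDimensional k V] {b : ℕ → V}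
    (hspan : ⊤ ≤ Submodule.span k (Set.range fun N : Fin (p ^ m) => b N))
    (hrank : Module.finrank k V = p ^ m) {T : V →ₗ[k] V} {s φ : Fin m → k}
    (hT : ∀ N < p ^ m, T (b N) = (lowestDigit p N : k) • b (N - 1) +
      (∑ i : Fin m, if N = p ^ (i : ℕ) then s i else 0) • b (p ^ m - 1))
    (hCH : T ^ (p ^ m) = ∑ i, φ i • T ^ (p ^ (i : ℕ))) (i : Fin m) :
    φ i = (-1) ^ (m - i) * s i := by
  have hn : 0 < p ^ m := pow_pos hp.out.pos m
  have hw : ∀ j, T (b (p ^ m - 1 - j)) = (lowestDigit p (p ^ m - 1 - j) : k) •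
      b (p ^ m - 1 - (j + 1)) + (∑ i : Fin m, if p ^ m - 1 - j = p ^ (i : ℕ) then s i else 0) •
      b (p ^ m - 1 - 0) := fun j => by
    rw [hT _ (by omega), Nat.sub_zero, show p ^ m - 1 - j - 1 = p ^ m - 1 - (j + 1) by omega]
  have hspan' : ⊤ ≤ Submodule.span k (Set.range fun j : Fin (p ^ m) => b (p ^ m - 1 - j)) := by
    refine hspan.trans (Submodule.span_mono ?_)
    rintro _ ⟨N, rfl⟩
    exact ⟨N.rev, by simp only [Fin.val_rev]; congr 1; omega⟩
  have hγ0 : ∏ l ∈ range (p ^ m), (lowestDigit p (p ^ m - 1 - l) : k) = 0 :=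
    prod_eq_zero (mem_range.2 (Nat.sub_lt hn one_pos)) (by simp [lowestDigit, digit])
  rw [coeff_eq_of_pow_eq_sum (e := fun i : Fin m => p ^ (i : ℕ))
    ((Nat.pow_right_injective hp.out.two_le).comp Fin.val_injective)
    (fun i => Nat.pow_lt_pow_right hp.out.one_lt i.isLt) hw
    (fun l hl => lowestDigit_cast_ne_zero k (by omega)) hγ0 hspan' hrank hCH i,
    prod_lowestDigit_between k i.isLt]

end AdjointQuotient

-- `m` is the paper's `n - 1`; the variables `x`, `D` and the parameters `ε` are indexed from `0`.
open AdjointQuotient in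
theorem adjoint_quotient_at_Delta_eps_general
    (k : Type*) [Field k] (p m : ℕ) [Fact (Nat.Prime p)] [CharP k p]
    (B : Type*) [CommRing B] [Algebra k B] [Module.Finite k B]
    (e : (MvPolynomial (Fin m) k ⧸
        Ideal.span (Set.range fun i : Fin m =>
          (MvPolynomial.X i : MvPolynomial (Fin m) k) ^ p)) ≃ₐ[k] B)
    (x : Fin m → B) (hx : ∀ j, x j = e (Ideal.Quotient.mk _ (MvPolynomial.X j)))
    (D : Fin m → Derivation k B B) (hD : ∀ i j, D i (x j) = if i = j then 1 else 0)
    (φ' : Fin m → Derivation k B B → k)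
    (hφ' : ∀ y : Derivation k B B,
      LinearMap.charpoly (y : B →ₗ[k] B) =
        X ^ (p ^ m) - ∑ i : Fin m, C (φ' i y) * X ^ (p ^ (i : ℕ)))
    (ε : Fin m → k)
    (Δε : Derivation k B B)
    (hΔε : Δε = (∑ i : Fin m,
        (∏ j ∈ Finset.univ.filter (fun j : Fin m => j < i), x j ^ (p - 1)) • D i)
      + ∑ i : Fin m, ((-1 : k) ^ (m - (i : ℕ)) * ε i) • ((∏ j : Fin m, x j ^ (p - 1)) • D i)) :
    (∀ i : Fin m, φ' i Δε = ε i) ∧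
      (Δε : B →ₗ[k] B) ^ (p ^ m) =
        ∑ i : Fin m, ε i • ((Δε : B →ₗ[k] B)) ^ (p ^ (i : ℕ)) := by
  have haeval : MvPolynomial.aeval x = e.toAlgHom.comp (Ideal.Quotient.mkₐ k _) :=
    MvPolynomial.algHom_ext fun i => by simp [hx]
  have hx0 : ∀ i, x i ^ p = 0 := fun i => by
    rw [← MvPolynomial.aeval_X (R := k) x i, ← map_pow, haeval]
    simp
  have hgen : Function.Surjective (MvPolynomial.aeval (R := k) x) := by
    rw [haeval]
    exact e.surjective.comp (Ideal.Quotient.mkₐ_surjective k _)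
  have hpow : ∀ i : Fin m, p ^ (i : ℕ) < p ^ m :=
    fun i => Nat.pow_lt_pow_right (Fact.out : p.Prime).one_lt i.isLt
  have hCH := pow_eq_sum_of_charpoly_eq (hφ' Δε)
  have hT : ∀ N < p ^ m, Δε (digitMono p x N) = (lowestDigit p N : k) • digitMono p x (N - 1) +
      (∑ i : Fin m, if N = p ^ (i : ℕ) then (-1) ^ (m - (i : ℕ)) * ε i else 0) •
        digitMono p x (p ^ m - 1) := fun N hN => by
    rw [hΔε, Derivation.add_apply, lower_sum_apply_digitMono hx0 hD hN,
      top_sum_apply_digitMono hx0 hD _ hN]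
  have hφ : ∀ i, φ' i Δε = ε i := fun i => by
    rw [coeff_eq_neg_one_pow_mul_of_pow_eq_sum (top_le_span_digitMono hx0 hgen)
      (finrank_eq_of_charpoly_eq (hφ' Δε) hpow) hT hCH i, ← mul_assoc, ← pow_add,
      Even.neg_one_pow ⟨_, rfl⟩, one_mul]
  exact ⟨hφ, by simpa only [hφ] using hCH⟩

/-- The adjoint quotient map evaluated at `Δ_ε` gives exactly `ε`: the coefficients of the
minimal (equal to characteristic) `p`-polynomial of `Δ_ε` satisfy `φ'_i(Δ_ε) = ε_{i+1}` for
`i = 0,...,n−2`, i.e. `Δ_ε^{p^{n-1}} = Σ_{i=0}^{n-2} ε_{i+1} Δ_ε^{p^i}`.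
Here `m` plays the role of `n − 1` and `ε` is indexed from `0`. -/
theorem adjoint_quotient_at_Delta_eps
    (k : Type*) [Field k] [IsAlgClosed k] (p m : ℕ) [Fact (Nat.Prime p)] [CharP k p]
    (hp : 3 < p) (hm : 2 ≤ m)
    (B : Type*) [CommRing B] [Algebra k B] [Module.Finite k B]
    (e : (MvPolynomial (Fin m) k ⧸
        Ideal.span (Set.range fun i : Fin m =>
          (MvPolynomial.X i : MvPolynomial (Fin m) k) ^ p)) ≃ₐ[k] B)
    (x : Fin m → B) (hx : ∀ j, x j = e (Ideal.Quotient.mk _ (MvPolynomial.X j)))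
    (D : Fin m → Derivation k B B) (hD : ∀ i j, D i (x j) = if i = j then 1 else 0)
    (φ' : Fin m → Derivation k B B → k)
    (hφ' : ∀ y : Derivation k B B,
      LinearMap.charpoly (y : B →ₗ[k] B) =
        X ^ (p ^ m) - ∑ i : Fin m, C (φ' i y) * X ^ (p ^ (i : ℕ)))
    (ε : Fin m → k)
    (Δε : Derivation k B B)
    (hΔε : Δε = (∑ i : Fin m,
        (∏ j ∈ Finset.univ.filter (fun j : Fin m => j < i), x j ^ (p - 1)) • D i)
      + ∑ i : Fin m, ((-1 : k) ^ (m - (i : ℕ)) * ε i) • ((∏ j : Fin m, x j ^ (p - 1)) • D i)) :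
    (∀ i : Fin m, φ' i Δε = ε i) ∧
      (Δε : B →ₗ[k] B) ^ (p ^ m) =
        ∑ i : Fin m, ε i • ((Δε : B →ₗ[k] B)) ^ (p ^ (i : ℕ)) :=
  adjoint_quotient_at_Delta_eps_general k p m B e x hx D hD φ' hφ' ε Δε hΔε
end
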